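/- arXiv:0901.2777 — 8 statements merged into one kernel-verified Lean document; each statement's English description precedes it below -/
import Mathlib

section
/- Let H : [0,1) → [0,∞) be increasing with I = ∫₀¹ H(t) dt < ∞. Then for every n ≥ 1 there exists a partition 0 = t₀ < t₁ < ⋯ < tₙ = 1 with ∫₀^{tᵢ} H(t) dt = (i/n)·I for all i, and for this partition one has (∑_{i=1}^n ∫_{t_{i-1}}^{t_i} (tᵢ − t) H(t)² dt)^{1/2} ≤ I/√n. -/
open MeasureTheory Set

/-- A partition `0 = t₀ < t₁ < ⋯ < tₙ = 1` of `[0,1]`. -/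
def IsPartition (n : ℕ) (t : ℕ → ℝ) : Prop :=
  t 0 = 0 ∧ t n = 1 ∧ ∀ i < n, t i < t (i + 1)

/-- `A(H,τ)² = ∑_{i=1}^n ∫_{t_{i-1}}^{t_i} (tᵢ − s) H(s)² ds`. -/
noncomputable def partErr (H : ℝ → ℝ) (n : ℕ) (t : ℕ → ℝ) : ℝ :=
  ∑ i ∈ Finset.range n, ∫ s in (t i)..(t (i + 1)), (t (i + 1) - s) * H s ^ 2

/-- `Aₙ(H) = inf_{τ ∈ 𝒯ₙ} A(H,τ)`. -/
noncomputable def An (H : ℝ → ℝ) (n : ℕ) : ℝ :=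
  sInf { x | ∃ t : ℕ → ℝ, IsPartition n t ∧ x = Real.sqrt (partErr H n t) }

/-!
On a piece `[a, b]` where `H` is nonnegative and increasing, `(b - s) H(s) ≤ ∫_s^b H ≤ ∫_a^b H`,
so `∫_a^b (b - s) H(s)² ds ≤ (∫_a^b H)²`. The intermediate value theorem applied to the continuous
increasing primitive of `H` produces a partition of `[0, 1]` into `n` pieces of mass `I / n` each,
and summing the piece bound gives `A(H, τ)² ≤ n (I / n)² = I² / n`.
-/

open intervalIntegral

section PieceBound

variable {H : ℝ → ℝ} {a b : ℝ}

lemma intervalIntegral_nonneg_of_Ioo (hab : a ≤ b) (hpos : ∀ s ∈ Ioo a b, 0 ≤ H s) :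
    0 ≤ ∫ s in a..b, H s := by
  rw [integral_of_le hab, integral_Ioc_eq_integral_Ioo]
  exact setIntegral_nonneg measurableSet_Ioo hpos

lemma monotoneOn_primitive_of_nonneg (hint : IntervalIntegrable H volume a b)
    (hpos : ∀ s ∈ Ioo a b, 0 ≤ H s) : MonotoneOn (fun x => ∫ s in a..x, H s) (Icc a b) := by
  intro x hx y hy hxy
  have hax : IntervalIntegrable H volume a x :=
    hint.mono_set (uIcc_subset_uIcc_left (Icc_subset_uIcc hx))
  have hay : IntervalIntegrable H volume a y :=
    hint.mono_set (uIcc_subset_uIcc_left (Icc_subset_uIcc hy))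
  have hnonneg : 0 ≤ ∫ s in x..y, H s :=
    intervalIntegral_nonneg_of_Ioo hxy fun s hs =>
      hpos s ⟨hx.1.trans_lt hs.1, hs.2.trans_le hy.2⟩
  exact sub_nonneg.1 ((integral_interval_sub_left hay hax).symm ▸ hnonneg)

variable (hmono : MonotoneOn H (Ioo a b)) (hpos : ∀ s ∈ Ioo a b, 0 ≤ H s)
  (hint : IntervalIntegrable H volume a b)
include hmono hpos hint

lemma sub_mul_le_intervalIntegral {s : ℝ} (hs : s ∈ Ioo a b) :
    (b - s) * H s ≤ ∫ u in a..b, H u := by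
  have hs' : s ∈ uIcc a b := Icc_subset_uIcc (Ioo_subset_Icc_self hs)
  have has : IntervalIntegrable H volume a s := hint.mono_set (uIcc_subset_uIcc_left hs')
  have hsb : IntervalIntegrable H volume s b := hint.mono_set (uIcc_subset_uIcc_right hs')
  calc (b - s) * H s = ∫ _ in s..b, H s := by rw [intervalIntegral.integral_const, smul_eq_mul]
    _ ≤ ∫ u in s..b, H u :=
        integral_mono_on_of_le_Ioo hs.2.le intervalIntegrable_const hsb fun u hu =>
          hmono hs ⟨hs.1.trans hu.1, hu.2⟩ hu.1.le
    _ ≤ (∫ u in a..s, H u) + ∫ u in s..b, H u :=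
        le_add_of_nonneg_left (intervalIntegral_nonneg_of_Ioo hs.1.le fun u hu =>
          hpos u ⟨hu.1, hu.2.trans hs.2⟩)
    _ = ∫ u in a..b, H u := integral_add_adjacent_intervals has hsb

lemma intervalIntegral_sub_mul_sq_le_sq (hab : a ≤ b) :
    ∫ s in a..b, (b - s) * H s ^ 2 ≤ (∫ s in a..b, H s) ^ 2 := by
  set V := ∫ s in a..b, H s
  have hpoint : ∀ s ∈ Ioo a b, (b - s) * H s ^ 2 ≤ V * H s := fun s hs =>
    calc (b - s) * H s ^ 2 = ((b - s) * H s) * H s := by ring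
      _ ≤ V * H s := mul_le_mul_of_nonneg_right
          (sub_mul_le_intervalIntegral hmono hpos hint hs) (hpos s hs)
  have hintIoo : IntegrableOn H (Ioo a b) :=
    (intervalIntegrable_iff_integrableOn_Ioo_of_le hab).1 hint
  have hintLHS : IntervalIntegrable (fun s => (b - s) * H s ^ 2) volume a b := by
    rw [intervalIntegrable_iff_integrableOn_Ioo_of_le hab]
    refine (hintIoo.const_mul V).mono'
      ((continuous_const.sub continuous_id).aestronglyMeasurable.mul (hintIoo.1.pow 2))
      ((ae_restrict_iff' measurableSet_Ioo).2 <| .of_forall fun s hs => ?_)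
    rw [Real.norm_of_nonneg (mul_nonneg (sub_nonneg.2 hs.2.le) (sq_nonneg _))]
    exact hpoint s hs
  calc ∫ s in a..b, (b - s) * H s ^ 2 ≤ ∫ s in a..b, V * H s :=
        integral_mono_on_of_le_Ioo hab hintLHS (hint.const_mul V) hpoint
    _ = V ^ 2 := by rw [intervalIntegral.integral_const_mul, sq]

end PieceBound

section Partition

variable {n : ℕ} {t : ℕ → ℝ}

lemma IsPartition.mem_Icc (ht : IsPartition n t) {i : ℕ} (hi : i ≤ n) : t i ∈ Icc 0 1 := by
  obtain ⟨h0, h1, hlt⟩ := ht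
  have hmono : MonotoneOn t (Iic n) :=
    (strictMonoOn_Iic_of_lt_succ fun m hm => by simpa using hlt m hm).monotoneOn
  exact ⟨h0 ▸ hmono (Nat.zero_le n) hi (Nat.zero_le i), h1 ▸ hmono hi (mem_Iic.2 le_rfl) hi⟩

lemma isPartition_uniform (hn : 1 ≤ n) : IsPartition n fun i => (i : ℝ) / n := by
  have hn0 : (0 : ℝ) < n := by exact_mod_cast hn
  refine ⟨by simp, div_self hn0.ne', fun i _ => ?_⟩
  simp only [Nat.cast_succ]
  gcongr
  exact lt_add_one _

lemma exists_isPartition_of_strictMono {F : ℝ → ℝ} {c : ℕ → ℝ} (hn : 1 ≤ n)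
    (hcont : ContinuousOn F (Icc 0 1)) (hmono : MonotoneOn F (Icc 0 1)) (hc : StrictMono c)
    (hF0 : F 0 = c 0) (hF1 : F 1 = c n) :
    ∃ t, IsPartition n t ∧ ∀ i ≤ n, F (t i) = c i := by
  -- The endpoints are pinned explicitly: `F` may be constant near `0` or `1`.
  have hchoice : ∀ i, ∃ x, (i = 0 → x = 0) ∧ (i = n → x = 1) ∧
      (i ≤ n → x ∈ Icc (0 : ℝ) 1 ∧ F x = c i) := by
    intro i
    rcases Nat.eq_zero_or_pos i with rfl | hi0
    · exact ⟨0, fun _ => rfl, fun h => by omega, fun _ => ⟨left_mem_Icc.2 zero_le_one, hF0⟩⟩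
    rcases lt_trichotomy i n with hin | rfl | hni
    · obtain ⟨x, hx, hFx⟩ := intermediate_value_Icc zero_le_one hcont
        ⟨hF0 ▸ hc.monotone (Nat.zero_le i), hF1 ▸ hc.monotone hin.le⟩
      exact ⟨x, fun h => by omega, fun h => by omega, fun _ => ⟨hx, hFx⟩⟩
    · exact ⟨1, fun h => by omega, fun _ => rfl, fun _ => ⟨right_mem_Icc.2 zero_le_one, hF1⟩⟩
    · exact ⟨0, fun h => by omega, fun h => by omega, fun h => by omega⟩
  choose t ht0 htn ht using hchoice
  refine ⟨t, ⟨ht0 0 rfl, htn n rfl, fun i hi => ?_⟩, fun i hi => (ht i hi).2⟩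
  by_contra! hle
  have hF := hmono (ht (i + 1) hi).1 (ht i hi.le).1 hle
  rw [(ht (i + 1) hi).2, (ht i hi.le).2] at hF
  exact (hc i.lt_succ_self).not_ge hF

lemma exists_isPartition_eq_mul {F : ℝ → ℝ} (hn : 1 ≤ n)
    (hcont : ContinuousOn F (Icc 0 1)) (hmono : MonotoneOn F (Icc 0 1)) (hF0 : F 0 = 0) :
    ∃ t, IsPartition n t ∧ ∀ i ≤ n, F (t i) = i / n * F 1 := by
  have hn0 : (0 : ℝ) < n := by exact_mod_cast hn
  have hzero : (0 : ℝ) ∈ Icc 0 1 := left_mem_Icc.2 zero_le_one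
  have hone : (1 : ℝ) ∈ Icc 0 1 := right_mem_Icc.2 zero_le_one
  rcases (hF0 ▸ hmono hzero hone zero_le_one : 0 ≤ F 1).eq_or_lt with hF1 | hF1
  · refine ⟨_, isPartition_uniform hn, fun i hi => ?_⟩
    have hmem := (isPartition_uniform hn).mem_Icc hi
    rw [← hF1, mul_zero]
    exact le_antisymm (hF1 ▸ hmono hmem hone hmem.2) (hF0 ▸ hmono hzero hmem hmem.1)
  · refine exists_isPartition_of_strictMono hn hcont hmono (fun i j hij => ?_) (by simpa)
      (by field_simp)
    gcongr

end Partition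

lemma partErr_le_sum_sq {H : ℝ → ℝ} {n : ℕ} {t : ℕ → ℝ} (ht : IsPartition n t)
    (hmono : MonotoneOn H (Ioo 0 1)) (hpos : ∀ s ∈ Ioo (0 : ℝ) 1, 0 ≤ H s)
    (hint : IntervalIntegrable H volume 0 1) :
    partErr H n t ≤ ∑ i ∈ Finset.range n, (∫ s in t i..t (i + 1), H s) ^ 2 := by
  refine Finset.sum_le_sum fun i hi => ?_
  have hi := Finset.mem_range.1 hi
  have hleft := ht.mem_Icc hi.le
  have hright := ht.mem_Icc hi
  have hsub : Ioo (t i) (t (i + 1)) ⊆ Ioo 0 1 := Ioo_subset_Ioo hleft.1 hright.2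
  exact intervalIntegral_sub_mul_sq_le_sq (hmono.mono hsub) (fun s hs => hpos s (hsub hs))
    (hint.mono_set (uIcc_subset_uIcc (Icc_subset_uIcc hleft) (Icc_subset_uIcc hright)))
    (ht.2.2 i hi).le

theorem stmt0 (H : ℝ → ℝ) (hmono : MonotoneOn H (Ico (0 : ℝ) 1))
    (hpos : ∀ t ∈ Ico (0 : ℝ) 1, 0 ≤ H t)
    (hint : IntegrableOn H (Ico (0 : ℝ) 1))
    (I : ℝ) (hI : I = ∫ t in (0 : ℝ)..1, H t)
    (n : ℕ) (hn : 1 ≤ n) :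
    ∃ t : ℕ → ℝ, IsPartition n t ∧
      (∀ i ≤ n, ∫ s in (0 : ℝ)..(t i), H s = (i / n) * I) ∧
      Real.sqrt (partErr H n t) ≤ I / Real.sqrt n := by
  have hint01 : IntervalIntegrable H volume 0 1 :=
    (intervalIntegrable_iff_integrableOn_Ico_of_le zero_le_one).2 hint
  have hint0 : ∀ x ∈ Icc (0 : ℝ) 1, IntervalIntegrable H volume 0 x := fun x hx =>
    hint01.mono_set (uIcc_subset_uIcc_left (Icc_subset_uIcc hx))
  have hpos' : ∀ s ∈ Ioo (0 : ℝ) 1, 0 ≤ H s := fun s hs => hpos s (Ioo_subset_Ico_self hs)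
  have hcont : ContinuousOn (fun x => ∫ s in (0 : ℝ)..x, H s) (Icc 0 1) := by
    simpa only [uIcc_of_le zero_le_one] using
      continuousOn_primitive_interval' hint01 left_mem_uIcc
  obtain ⟨t, ht, hmass⟩ := exists_isPartition_eq_mul hn hcont
    (monotoneOn_primitive_of_nonneg hint01 hpos') integral_same
  rw [← hI] at hmass
  refine ⟨t, ht, hmass, ?_⟩
  have hpiece : ∀ i < n, ∫ s in t i..t (i + 1), H s = I / n := fun i hi => by
    rw [← integral_interval_sub_left (hint0 _ (ht.mem_Icc hi)) (hint0 _ (ht.mem_Icc hi.le)),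
      hmass _ hi, hmass _ hi.le]
    field_simp
    push_cast
    ring
  have hI0 : 0 ≤ I := hI ▸ intervalIntegral_nonneg_of_Ioo zero_le_one hpos'
  calc √(partErr H n t) ≤ √(∑ _ ∈ Finset.range n, (I / n) ^ 2) := by
        refine Real.sqrt_le_sqrt ((partErr_le_sum_sq ht (hmono.mono Ioo_subset_Ico_self) hpos'
          hint01).trans_eq (Finset.sum_congr rfl fun i hi => ?_))
        rw [hpiece i (Finset.mem_range.1 hi)]
    _ = √(I ^ 2 / n) := by
        rw [Finset.sum_const, Finset.card_range, nsmul_eq_mul]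
        field_simp
    _ = I / √n := by rw [Real.sqrt_div (sq_nonneg I), Real.sqrt_sq hI0]
end

section
/- Let H : [0,1) → [0,∞) be increasing. Then for all n ≥ 2, Aₙ(H)² ≤ inf_{T ∈ (0,1)} [ (∫₀ᵀ H(t) dt)² / (n−1) + ∫_T¹ (1−t) H(t)² dt ]. -/
open MeasureTheory Set

/-! Cut `[0, T]` into `n - 1` pieces carrying equal mass `I / (n - 1)` of `H`, where
`I = ∫₀ᵀ H`, and take `[T, 1]` as the last piece. On a piece `[a, b] ⊆ [0, 1)` monotonicity and
positivity give `(b - s) H(s) ≤ ∫ₛᵇ H ≤ ∫ₐᵇ H`, hence `∫ₐᵇ (b - s) H² ≤ (∫ₐᵇ H)²`, so the first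
`n - 1` pieces contribute at most `(n - 1) (I / (n - 1))² = I² / (n - 1)`. -/

theorem integral_sub_mul_sq_le_sq_integral {H : ℝ → ℝ} {a b : ℝ} (hab : a ≤ b)
    (hmono : MonotoneOn H (Icc a b)) (hpos : ∀ s ∈ Icc a b, 0 ≤ H s) :
    ∫ s in a..b, (b - s) * H s ^ 2 ≤ (∫ s in a..b, H s) ^ 2 := by
  have hint : ∀ {x y}, x ∈ Icc a b → y ∈ Icc a b → IntervalIntegrable H volume x y :=
    fun hx hy => (hmono.mono (uIcc_subset_Icc hx hy)).intervalIntegrable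
  set K := ∫ s in a..b, H s
  have hpt : ∀ s ∈ Icc a b, (b - s) * H s ^ 2 ≤ H s * K := by
    intro s hs
    have htail : (b - s) * H s ≤ ∫ u in s..b, H u := by
      simpa using intervalIntegral.integral_mono_on hs.2 intervalIntegrable_const
        (hint hs (right_mem_Icc.2 hab))
        fun u hu => hmono hs ⟨hs.1.trans hu.1, hu.2⟩ hu.1
    have hK : ∫ u in s..b, H u ≤ K :=
      intervalIntegral.integral_mono_interval hs.1 hs.2 le_rfl
        ((ae_restrict_iff' measurableSet_Ioc).2 (ae_of_all _ fun u hu =>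
          hpos u (Ioc_subset_Icc_self hu)))
        (hint (left_mem_Icc.2 hab) (right_mem_Icc.2 hab))
    nlinarith [mul_le_mul_of_nonneg_left (htail.trans hK) (hpos s hs)]
  calc ∫ s in a..b, (b - s) * H s ^ 2 ≤ ∫ s in a..b, H s * K := by
        rw [intervalIntegral.integral_of_le hab, intervalIntegral.integral_of_le hab]
        have hHK := (hint (left_mem_Icc.2 hab) (right_mem_Icc.2 hab)).1.mul_const K
        refine integral_mono_of_nonneg ?_ hHK ?_ <;>
          refine (ae_restrict_iff' measurableSet_Ioc).2 (ae_of_all _ fun s hs => ?_)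
        · exact mul_nonneg (sub_nonneg.2 hs.2) (sq_nonneg _)
        · exact hpt s (Ioc_subset_Icc_self hs)
    _ = K ^ 2 := by rw [intervalIntegral.integral_mul_const, sq]

theorem exists_partition_eq_increments {F : ℝ → ℝ} {a b : ℝ} (hab : a < b)
    (hcont : ContinuousOn F (Icc a b)) (hmono : MonotoneOn F (Icc a b)) {m : ℕ} (hm : 0 < m) :
    ∃ t : ℕ → ℝ, t 0 = a ∧ t m = b ∧ (∀ i < m, t i < t (i + 1)) ∧ (∀ i ≤ m, t i ∈ Icc a b) ∧
      ∀ i ≤ m, F (t i) = F a + i / m * (F b - F a) := by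
  have hm' : (0 : ℝ) < m := Nat.cast_pos.2 hm
  have hratio : ∀ i ≤ m, (i : ℝ) / m ∈ Icc (0 : ℝ) 1 := fun i hi =>
    ⟨by positivity, (div_le_one hm').2 (Nat.cast_le.2 hi)⟩
  have hratio_lt : ∀ i : ℕ, (i : ℝ) / m < ((i + 1 : ℕ) : ℝ) / m := fun i =>
    div_lt_div_of_pos_right (by push_cast; linarith) hm'
  have ha := left_mem_Icc.2 hab.le
  have hb := right_mem_Icc.2 hab.le
  rcases (hmono ha hb hab.le).eq_or_lt with hFab | hFab
  · -- `F` is constant on `[a, b]`, so the uniform partition works.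
    refine ⟨fun i => a + i / m * (b - a), by simp, by simp [hm'.ne'], fun i _ => ?_,
      fun i hi => ?_, fun i hi => ?_⟩
    · have := hratio_lt i
      dsimp only
      nlinarith
    · obtain ⟨h0, h1⟩ := hratio i hi
      constructor <;> nlinarith
    · have hmem : a + i / m * (b - a) ∈ Icc a b := by
        obtain ⟨h0, h1⟩ := hratio i hi
        constructor <;> nlinarith
      have := hmono ha hmem hmem.1
      have := hmono hmem hb hmem.2
      rw [← hFab, sub_self, mul_zero, add_zero]
      linarith
  · have hivt : ∀ i, ∃ s, 0 < i → i < m → s ∈ Icc a b ∧ F s = F a + i / m * (F b - F a) := by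
      intro i
      by_cases hi : i ≤ m
      · obtain ⟨h0, h1⟩ := hratio i hi
        obtain ⟨s, hs, hFs⟩ := intermediate_value_Icc hab.le hcont
          (⟨by nlinarith, by nlinarith⟩ : F a + i / m * (F b - F a) ∈ Icc (F a) (F b))
        exact ⟨s, fun _ _ => ⟨hs, hFs⟩⟩
      · exact ⟨a, fun _ h => absurd h.le hi⟩
    choose s hs using hivt
    set t : ℕ → ℝ := fun i => if i = 0 then a else if i < m then s i else b with ht
    have hmem : ∀ i ≤ m, t i ∈ Icc a b := by
      intro i hi
      simp only [ht]
      split_ifs with h0 hlt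
      exacts [ha, (hs i (Nat.pos_of_ne_zero h0) hlt).1, hb]
    have hval : ∀ i ≤ m, F (t i) = F a + i / m * (F b - F a) := by
      intro i hi
      simp only [ht]
      split_ifs with h0 hlt
      · simp [h0]
      · exact (hs i (Nat.pos_of_ne_zero h0) hlt).2
      · rw [le_antisymm hi (not_lt.1 hlt)]
        field_simp
        ring
    -- `F ∘ t` is strictly increasing and `F` is monotone, so `t` is strictly increasing.
    refine ⟨t, by simp [ht], by simp [ht, hm.ne'], fun i hi => ?_, hmem, hval⟩
    by_contra! hle
    have := hmono (hmem (i + 1) hi) (hmem i hi.le) hle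
    rw [hval i hi.le, hval (i + 1) hi] at this
    nlinarith [hratio_lt i]

theorem exists_partition_integral_eq {H : ℝ → ℝ} {a b : ℝ} (hab : a < b)
    (hint : IntervalIntegrable H volume a b) (hpos : ∀ s ∈ Icc a b, 0 ≤ H s) {m : ℕ} (hm : 0 < m) :
    ∃ t : ℕ → ℝ, t 0 = a ∧ t m = b ∧ (∀ i < m, t i < t (i + 1)) ∧ (∀ i ≤ m, t i ∈ Icc a b) ∧
      ∀ i < m, ∫ s in t i..t (i + 1), H s = (∫ s in a..b, H s) / m := by
  have hint' : ∀ {x}, x ∈ Icc a b → IntervalIntegrable H volume a x := fun hx =>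
    hint.mono_set (uIcc_subset_uIcc left_mem_uIcc (Icc_subset_uIcc hx))
  set F : ℝ → ℝ := fun x => ∫ s in a..x, H s with hF
  have hcont : ContinuousOn F (Icc a b) := by
    rw [← uIcc_of_le hab.le]
    refine intervalIntegral.continuousOn_primitive_interval ?_
    rw [uIcc_of_le hab.le]
    exact (intervalIntegrable_iff_integrableOn_Icc_of_le hab.le).1 hint
  have hmono : MonotoneOn F (Icc a b) := fun x hx y hy hxy =>
    intervalIntegral.integral_mono_interval le_rfl hx.1 hxy
      ((ae_restrict_iff' measurableSet_Ioc).2 (ae_of_all _ fun u hu =>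
        hpos u ⟨hu.1.le, hu.2.trans hy.2⟩))
      (hint' hy)
  obtain ⟨t, ht0, htm, hlt, hmem, hval⟩ := exists_partition_eq_increments hab hcont hmono hm
  refine ⟨t, ht0, htm, hlt, hmem, fun i hi => ?_⟩
  rw [← intervalIntegral.integral_interval_sub_left (hint' (hmem (i + 1) hi))
    (hint' (hmem i hi.le))]
  change F (t (i + 1)) - F (t i) = F b / m
  rw [hval (i + 1) hi, hval i hi.le]
  simp only [hF, intervalIntegral.integral_same]
  push_cast
  ring

section partErr

variable {H : ℝ → ℝ} {n : ℕ} {t : ℕ → ℝ}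

theorem partErr_succ : partErr H (n + 1) t = partErr H n t +
    ∫ s in t n..t (n + 1), (t (n + 1) - s) * H s ^ 2 :=
  Finset.sum_range_succ _ _

theorem partErr_congr {t' : ℕ → ℝ} (h : ∀ i ≤ n, t i = t' i) : partErr H n t = partErr H n t' :=
  Finset.sum_congr rfl fun i hi => by
    rw [h i (Finset.mem_range.1 hi).le, h (i + 1) (Finset.mem_range.1 hi)]

theorem partErr_nonneg (ht : ∀ i < n, t i ≤ t (i + 1)) : 0 ≤ partErr H n t :=
  Finset.sum_nonneg fun i hi => intervalIntegral.integral_nonneg (ht i (Finset.mem_range.1 hi))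
    fun _ hs => mul_nonneg (sub_nonneg.2 hs.2) (sq_nonneg _)

theorem An_sq_le_partErr (ht : IsPartition n t) : An H n ^ 2 ≤ partErr H n t := by
  have hnonneg : 0 ≤ partErr H n t := partErr_nonneg fun i hi => (ht.2.2 i hi).le
  have hsqrt_nonneg : ∀ x ∈ { x | ∃ t : ℕ → ℝ, IsPartition n t ∧ x = Real.sqrt (partErr H n t) },
      0 ≤ x := fun _ ⟨_, _, hx⟩ => hx ▸ Real.sqrt_nonneg _
  have hAn : An H n ≤ Real.sqrt (partErr H n t) := csInf_le ⟨0, hsqrt_nonneg⟩ ⟨t, ht, rfl⟩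
  have hAn_nonneg : 0 ≤ An H n := le_csInf ⟨_, t, ht, rfl⟩ hsqrt_nonneg
  calc An H n ^ 2 ≤ Real.sqrt (partErr H n t) ^ 2 := by gcongr
    _ = partErr H n t := Real.sq_sqrt hnonneg

theorem partErr_le_of_integral_eq {S : Set ℝ} {c : ℝ} (hmono : MonotoneOn H S)
    (hpos : ∀ s ∈ S, 0 ≤ H s) (ht : ∀ i < n, t i ≤ t (i + 1))
    (hS : ∀ i < n, Icc (t i) (t (i + 1)) ⊆ S)
    (hmass : ∀ i < n, ∫ s in t i..t (i + 1), H s = c) :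
    partErr H n t ≤ n * c ^ 2 := by
  calc partErr H n t ≤ ∑ _i ∈ Finset.range n, c ^ 2 := Finset.sum_le_sum fun i hi => by
        rw [Finset.mem_range] at hi
        rw [← hmass i hi]
        exact integral_sub_mul_sq_le_sq_integral (ht i hi) (hmono.mono (hS i hi))
          fun s hs => hpos s (hS i hi hs)
    _ = n * c ^ 2 := by simp

end partErr

theorem stmt4_general (H : ℝ → ℝ) (hmono : MonotoneOn H (Ico (0 : ℝ) 1))
    (hpos : ∀ t ∈ Ico (0 : ℝ) 1, 0 ≤ H t)
    (n : ℕ) (hn : 2 ≤ n) (T : ℝ) (hT : T ∈ Ioo (0 : ℝ) 1) :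
    An H n ^ 2 ≤ (∫ t in (0 : ℝ)..T, H t) ^ 2 / (n - 1)
      + ∫ t in T..(1 : ℝ), (1 - t) * H t ^ 2 := by
  obtain ⟨m, rfl⟩ : ∃ m, n = m + 1 := ⟨n - 1, by omega⟩
  have hm : 0 < m := by omega
  have hT1 : Icc 0 T ⊆ Ico (0 : ℝ) 1 := Icc_subset_Ico_right hT.2
  have hint : IntervalIntegrable H volume 0 T :=
    (hmono.mono (by rw [uIcc_of_le hT.1.le]; exact hT1)).intervalIntegrable
  obtain ⟨t, ht0, htm, hlt, hmem, hmass⟩ :=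
    exists_partition_integral_eq hT.1 hint (fun s hs => hpos s (hT1 hs)) hm
  set τ := Function.update t (m + 1) 1
  have hτ : ∀ i ≤ m, τ i = t i := fun i hi => Function.update_of_ne (by omega) _ _
  have hτ1 : τ (m + 1) = 1 := Function.update_self ..
  have hpart : IsPartition (m + 1) τ := by
    refine ⟨by rw [hτ 0 m.zero_le, ht0], hτ1, fun i hi => ?_⟩
    rcases (Nat.lt_succ_iff.1 hi).lt_or_eq with hi | rfl
    · rw [hτ i hi.le, hτ (i + 1) hi]
      exact hlt i hi
    · rw [hτ i le_rfl, htm, hτ1]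
      exact hT.2
  calc An H (m + 1) ^ 2 ≤ partErr H (m + 1) τ := An_sq_le_partErr hpart
    _ = partErr H m t + ∫ s in T..1, (1 - s) * H s ^ 2 := by
        rw [partErr_succ, partErr_congr hτ, hτ m le_rfl, htm, hτ1]
    _ ≤ m * ((∫ s in 0..T, H s) / m) ^ 2 + ∫ s in T..1, (1 - s) * H s ^ 2 := by
        gcongr
        exact partErr_le_of_integral_eq hmono hpos (fun i hi => (hlt i hi).le)
          (fun i hi => (Icc_subset_Icc (hmem i hi.le).1 (hmem (i + 1) hi).2).trans hT1) hmass
    _ = _ := by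
        rw [show ((m + 1 : ℕ) : ℝ) - 1 = m by push_cast; ring]
        field_simp

theorem stmt4 (H : ℝ → ℝ) (hmono : MonotoneOn H (Ico (0 : ℝ) 1))
    (hpos : ∀ t ∈ Ico (0 : ℝ) 1, 0 ≤ H t)
    (n : ℕ) (hn : 2 ≤ n) (T : ℝ) (hT : T ∈ Ioo (0 : ℝ) 1)
    (hint : IntegrableOn H (Icc (0 : ℝ) T)) :
    An H n ^ 2 ≤ (∫ t in (0 : ℝ)..T, H t) ^ 2 / (n - 1)
      + ∫ t in T..(1 : ℝ), (1 - t) * H t ^ 2 :=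
  stmt4_general H hmono hpos n hn T hT
end

section
/- Let β ∈ (0,1). There exists a constant c ≥ 1 such that for all t ∈ [0,1), (1/c) · (1 − log(1−t))^{−(1+β)} / (1−t)² ≤ ∫₁^∞ z^{−β−2} (1−t)^{1/z − 2} dz ≤ c · (1 − log(1−t))^{−(1+β)} / (1−t)². -/
/-!
Write `1 - t = exp (-L)` with `L = -log (1 - t) ≥ 0`. Then the integral is
`exp (2L) · ∫_{z > 1} z^(-p) exp (-L/z) dz` with `p = β + 2`, and the latter integral is comparable
to `(1 + L)^(1 - p)`. From below, restrict to `z > 1 + L`, where `exp (-L/z) ≥ exp (-1)`. From above,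
the bound `(1 + x)^p exp (-x) ≤ (1 + p)^p` at `x = L/z` gives
`z^(-p) exp (-L/z) ≤ (1 + p)^p (z + L)^(-p)`, whose integral over `z > 1` is `(1 + L)^(1 - p) / (p - 1)`.
-/

open MeasureTheory Set Real

lemma one_add_rpow_mul_exp_neg_le {p x : ℝ} (hp : 0 < p) (hx : 0 ≤ x) :
    (1 + x) ^ p * exp (-x) ≤ (1 + p) ^ p := by
  have hlin : 1 + x ≤ (1 + p) * exp (x / p) :=
    calc 1 + x ≤ (1 + p) * (x / p + 1) := by
          have : p * (x / p) = x := mul_div_cancel₀ x hp.ne'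
          nlinarith [div_nonneg hx hp.le]
      _ ≤ (1 + p) * exp (x / p) := by gcongr; exact add_one_le_exp _
  calc (1 + x) ^ p * exp (-x) ≤ ((1 + p) * exp (x / p)) ^ p * exp (-x) := by gcongr
    _ = (1 + p) ^ p := by
      rw [mul_rpow (by positivity) (exp_nonneg _), ← exp_mul, div_mul_cancel₀ _ hp.ne',
        mul_assoc, ← exp_add, add_neg_cancel, exp_zero, mul_one]

lemma rpow_neg_mul_exp_neg_div_le {p L z : ℝ} (hp : 0 < p) (hL : 0 ≤ L) (hz : 0 < z) :
    z ^ (-p) * exp (-(L / z)) ≤ (1 + p) ^ p * (z + L) ^ (-p) := by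
  have hzL : 0 < z + L := by linarith
  have hsplit : z ^ (-p) = (z + L) ^ (-p) * (1 + L / z) ^ p := by
    rw [show 1 + L / z = (z + L) / z by field_simp, div_rpow hzL.le hz.le, rpow_neg hz.le,
      rpow_neg hzL.le]
    field_simp
  rw [hsplit, mul_assoc, mul_comm _ ((z + L) ^ (-p))]
  gcongr
  exact one_add_rpow_mul_exp_neg_le hp (div_nonneg hL hz.le)

lemma integrableOn_Ioi_add_rpow {a c d : ℝ} (ha : a < -1) (hcd : 0 < c + d) :
    IntegrableOn (fun z : ℝ => (z + d) ^ a) (Ioi c) := by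
  have := (measurePreserving_add_right volume d).integrableOn_comp_preimage
    (measurableEmbedding_addRight d) |>.mpr (integrableOn_Ioi_rpow_of_lt ha hcd)
  rwa [preimage_add_const_Ioi, add_sub_cancel_right] at this

lemma integral_Ioi_add_rpow {a c d : ℝ} (ha : a < -1) (hcd : 0 < c + d) :
    ∫ z in Ioi c, (z + d) ^ a = -(c + d) ^ (a + 1) / (a + 1) := by
  have := (measurePreserving_add_right volume d).setIntegral_preimage_emb
    (measurableEmbedding_addRight d) (fun z => z ^ a) (Ioi (c + d))
  rw [preimage_add_const_Ioi, add_sub_cancel_right] at this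
  rw [← integral_Ioi_rpow_of_lt ha hcd, ← this]

section
variable {p L : ℝ}

lemma integrableOn_rpow_neg_mul_exp_neg_div (hp : 1 < p) (hL : 0 ≤ L) :
    IntegrableOn (fun z : ℝ => z ^ (-p) * exp (-(L / z))) (Ioi 1) := by
  refine (integrableOn_Ioi_rpow_of_lt (neg_lt_neg hp) one_pos).mono' ?_ ?_
  · refine ContinuousOn.aestronglyMeasurable (fun z hz => ?_) measurableSet_Ioi
    have hz0 : z ≠ 0 := (zero_lt_one.trans hz).ne'
    exact ContinuousAt.continuousWithinAt (by fun_prop (disch := simp [hz0]))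
  · filter_upwards [ae_restrict_mem measurableSet_Ioi] with z hz
    have hz0 : 0 < z := zero_lt_one.trans hz
    rw [Real.norm_of_nonneg (by positivity)]
    calc z ^ (-p) * exp (-(L / z)) ≤ z ^ (-p) * 1 := by
          gcongr
          rw [exp_le_one_iff, neg_nonpos]
          positivity
      _ = z ^ (-p) := mul_one _

lemma integral_rpow_neg_mul_exp_neg_div_le (hp : 1 < p) (hL : 0 ≤ L) :
    ∫ z in Ioi 1, z ^ (-p) * exp (-(L / z)) ≤ (1 + p) ^ p / (p - 1) * (1 + L) ^ (1 - p) := by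
  have ha : -p < -1 := neg_lt_neg hp
  have h1L : (0 : ℝ) < 1 + L := by linarith
  calc ∫ z in Ioi 1, z ^ (-p) * exp (-(L / z))
      ≤ ∫ z in Ioi 1, (1 + p) ^ p * (z + L) ^ (-p) :=
        setIntegral_mono_on (integrableOn_rpow_neg_mul_exp_neg_div hp hL)
          ((integrableOn_Ioi_add_rpow ha h1L).const_mul _) measurableSet_Ioi
          fun z hz => rpow_neg_mul_exp_neg_div_le (by linarith) hL (zero_lt_one.trans hz)
    _ = (1 + p) ^ p / (p - 1) * (1 + L) ^ (1 - p) := by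
        rw [integral_const_mul, integral_Ioi_add_rpow ha h1L, show -p + 1 = -(p - 1) by ring,
          show 1 - p = -(p - 1) by ring, neg_div_neg_eq]
        ring

lemma le_integral_rpow_neg_mul_exp_neg_div (hp : 1 < p) (hL : 0 ≤ L) :
    exp (-1) / (p - 1) * (1 + L) ^ (1 - p) ≤ ∫ z in Ioi 1, z ^ (-p) * exp (-(L / z)) := by
  have h1L : (0 : ℝ) < 1 + L := by linarith
  have hsub : Ioi (1 + L) ⊆ Ioi 1 := Ioi_subset_Ioi (by linarith)
  have hf := integrableOn_rpow_neg_mul_exp_neg_div hp hL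
  calc exp (-1) / (p - 1) * (1 + L) ^ (1 - p)
      = ∫ z in Ioi (1 + L), exp (-1) * z ^ (-p) := by
        rw [integral_const_mul, integral_Ioi_rpow_of_lt (neg_lt_neg hp) h1L,
          show -p + 1 = -(p - 1) by ring, show 1 - p = -(p - 1) by ring, neg_div_neg_eq]
        ring
    _ ≤ ∫ z in Ioi (1 + L), z ^ (-p) * exp (-(L / z)) := by
        refine setIntegral_mono_on
          ((integrableOn_Ioi_rpow_of_lt (neg_lt_neg hp) h1L).const_mul _) (hf.mono_set hsub)
          measurableSet_Ioi fun z hz => ?_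
        have hz0 : 0 < z := h1L.trans hz
        rw [mul_comm]
        gcongr
        rw [div_le_one hz0]
        exact (by linarith : L ≤ 1 + L).trans hz.le
    _ ≤ ∫ z in Ioi 1, z ^ (-p) * exp (-(L / z)) := by
        refine setIntegral_mono_set hf ?_ hsub.eventuallyLE
        filter_upwards [ae_restrict_mem measurableSet_Ioi] with z hz
        have hz0 : 0 < z := zero_lt_one.trans hz
        positivity

end

lemma exp_neg_rpow_one_div_sub_two (L z : ℝ) :
    exp (-L) ^ (1 / z - 2) = exp (-(L / z)) / exp (-L) ^ 2 := by
  rw [← exp_mul, ← exp_nat_mul, ← exp_sub]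
  ring_nf

theorem stmt5 (β : ℝ) (hβ : β ∈ Ioo (0 : ℝ) 1) :
    ∃ c : ℝ, 1 ≤ c ∧ ∀ t ∈ Ico (0 : ℝ) 1,
      (1 / c) * ((1 - Real.log (1 - t)) ^ (-(1 + β)) / (1 - t) ^ 2) ≤
          (∫ z in Ici (1 : ℝ), z ^ (-β - 2) * (1 - t) ^ (1 / z - 2)) ∧
        (∫ z in Ici (1 : ℝ), z ^ (-β - 2) * (1 - t) ^ (1 / z - 2)) ≤
          c * ((1 - Real.log (1 - t)) ^ (-(1 + β)) / (1 - t) ^ 2) := by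
  obtain ⟨hβ0, -⟩ := hβ
  have hp : 1 < β + 2 := by linarith
  set A := (3 + β) ^ (β + 2) / (1 + β)
  have hA : 0 ≤ A := by positivity
  have hc : (1 + β) * exp 1 ≤ (1 + β) * exp 1 + A := le_add_of_nonneg_right hA
  refine ⟨(1 + β) * exp 1 + A, ?_, fun t ht => ?_⟩
  · nlinarith [add_one_le_exp (1 : ℝ)]
  obtain ⟨L, hL, hs⟩ : ∃ L, 0 ≤ L ∧ 1 - t = exp (-L) :=
    ⟨-log (1 - t), neg_nonneg.mpr (log_nonpos (by linarith [ht.2]) (by linarith [ht.1])),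
      by rw [neg_neg, exp_log (by linarith [ht.2])]⟩
  simp only [hs, log_exp, sub_neg_eq_add, integral_Ici_eq_integral_Ioi,
    exp_neg_rpow_one_div_sub_two, mul_div_assoc', integral_div, show -β - 2 = -(β + 2) by ring]
  have hlow := le_integral_rpow_neg_mul_exp_neg_div hp hL
  have hup := integral_rpow_neg_mul_exp_neg_div_le hp hL
  rw [show 1 - (β + 2) = -(1 + β) by ring, show β + 2 - 1 = 1 + β by ring] at hlow hup
  rw [show 1 + (β + 2) = 3 + β by ring] at hup
  constructor
  · refine div_le_div_of_nonneg_right (le_trans ?_ hlow) (by positivity)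
    gcongr ?_ * _
    rw [exp_neg, inv_div_left, one_div]
    exact inv_anti₀ (by positivity) hc
  · refine div_le_div_of_nonneg_right (hup.trans ?_) (by positivity)
    gcongr ?_ * _
    exact le_add_of_nonneg_left (by positivity)
end

section
/- Let θ ∈ [1,2) and define H_θ(t) = √((2−θ)(1−t)^{−θ}) for t ∈ [0,1). Then for all n ≥ 1 and every partition 0 = t₀ < ⋯ < tₙ = 1, one has ∑_{i=1}^n ∫_{t_{i-1}}^{t_i} (tᵢ − t) H_θ(t)² dt ≥ (θ−1)^{n−1}. -/
open MeasureTheory Set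

/-!
The last interval `[a, 1]` costs exactly `(1 - a)^{2-θ}`. By induction on the number `k` of
intervals, every chain `a = t₀ < ⋯ < t_k = 1` costs at least `(θ - 1)^{k-1} (1 - a)^{2-θ}`: the
cost of the first interval `[a, b]` has a closed form, and with `z = (1 - b)/(1 - a)` the induction
step reduces to the weighted AM–GM inequality `z^{2-θ} ≤ (θ - 1) + (2 - θ) z`. For `θ = 1` the
step is just nonnegativity of the cost.
-/

lemma integral_one_sub_mul_weight {θ a : ℝ} (hθ : θ < 2) (ha : a ≤ 1) :
    ∫ s in a..1, (1 - s) * ((2 - θ) * (1 - s) ^ (-θ)) = (1 - a) ^ (2 - θ) := by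
  rw [intervalIntegral.integral_comp_sub_left (fun u ↦ u * ((2 - θ) * u ^ (-θ))) 1, sub_self]
  have hpow : ∀ u ∈ uIoc 0 (1 - a), u * ((2 - θ) * u ^ (-θ)) = (2 - θ) * u ^ (1 - θ) := by
    intro u hu
    rw [uIoc_of_le (by linarith), mem_Ioc] at hu
    rw [show 1 - θ = 1 + -θ by ring, Real.rpow_add hu.1, Real.rpow_one]
    ring
  rw [intervalIntegral.integral_congr_ae (ae_of_all _ hpow), intervalIntegral.integral_const_mul,
    integral_rpow (Or.inl (by linarith)), show 1 - θ + 1 = 2 - θ by ring,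
    Real.zero_rpow (by linarith), sub_zero, mul_div_cancel₀ _ (by linarith)]

lemma integral_sub_mul_weight {θ a b : ℝ} (hθ1 : θ ≠ 1) (hθ2 : θ ≠ 2) (hab : a ≤ b) (hb : b < 1) :
    ∫ s in a..b, (b - s) * ((2 - θ) * (1 - s) ^ (-θ))
      = (1 - a) ^ (2 - θ) - (1 - b) ^ (2 - θ) / (θ - 1)
        + (2 - θ) / (θ - 1) * (1 - b) * (1 - a) ^ (1 - θ) := by
  set y := 1 - b
  set x := 1 - a
  have hy : 0 < y := by simp only [y]; linarith
  have hyx : y ≤ x := by simp only [x, y]; linarith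
  have hshift : ∫ s in a..b, (b - s) * ((2 - θ) * (1 - s) ^ (-θ))
      = ∫ u in y..x, (u - y) * ((2 - θ) * u ^ (-θ)) := by
    rw [← intervalIntegral.integral_comp_sub_left (fun u ↦ (u - y) * ((2 - θ) * u ^ (-θ))) 1]
    congr 1 with s
    simp only [y]
    ring
  rw [hshift]
  have h0 : (0 : ℝ) ∉ uIcc y x := by
    rw [uIcc_of_le hyx, mem_Icc]
    exact fun h ↦ hy.not_ge h.1
  have hsplit : ∀ u ∈ uIoc y x,
      (u - y) * ((2 - θ) * u ^ (-θ)) = (2 - θ) * u ^ (1 - θ) - (2 - θ) * y * u ^ (-θ) := by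
    intro u hu
    rw [uIoc_of_le hyx, mem_Ioc] at hu
    rw [show 1 - θ = 1 + -θ by ring, Real.rpow_add (hy.trans hu.1), Real.rpow_one]
    ring
  have hint : ∀ r : ℝ, IntervalIntegrable (fun u : ℝ ↦ u ^ r) volume y x :=
    fun r ↦ intervalIntegral.intervalIntegrable_rpow (Or.inr h0)
  rw [intervalIntegral.integral_congr_ae (ae_of_all _ hsplit),
    intervalIntegral.integral_sub ((hint _).const_mul _) ((hint _).const_mul _),
    intervalIntegral.integral_const_mul, intervalIntegral.integral_const_mul,
    integral_rpow (Or.inr ⟨by contrapose! hθ2; linarith, h0⟩),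
    integral_rpow (Or.inr ⟨by contrapose! hθ1; linarith, h0⟩),
    show 1 - θ + 1 = 2 - θ by ring, show -θ + 1 = 1 - θ by ring]
  have hyy : y ^ (2 - θ) = y * y ^ (1 - θ) := by
    rw [show 2 - θ = 1 + (1 - θ) by ring, Real.rpow_add hy, Real.rpow_one]
  have : θ - 1 ≠ 0 := sub_ne_zero.2 hθ1
  have : 1 - θ ≠ 0 := sub_ne_zero.2 (Ne.symm hθ1)
  have : 2 - θ ≠ 0 := sub_ne_zero.2 (Ne.symm hθ2)
  rw [hyy]
  field_simp
  ring

lemma mul_rpow_le_of_weighted_amgm {θ x y c : ℝ} (hθ1 : 1 < θ) (hθ2 : θ < 2) (hx : 0 < x)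
    (hy : 0 ≤ y) (hc0 : 0 ≤ c) (hc1 : c ≤ 1) :
    (θ - 1) * c * x ^ (2 - θ) ≤
      x ^ (2 - θ) - y ^ (2 - θ) / (θ - 1) + (2 - θ) / (θ - 1) * y * x ^ (1 - θ)
        + c * y ^ (2 - θ) := by
  set z := y / x
  have hz : 0 ≤ z := div_nonneg hy hx.le
  have hzx : z * x = y := div_mul_cancel₀ _ hx.ne'
  have hamgm : z ^ (2 - θ) ≤ (θ - 1) + (2 - θ) * z := by
    simpa [Real.one_rpow, add_comm] using
      Real.geom_mean_le_arith_mean2_weighted (by linarith : 0 ≤ 2 - θ)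
        (by linarith : 0 ≤ θ - 1) hz zero_le_one (by ring)
  have hy_rpow : y ^ (2 - θ) = z ^ (2 - θ) * x ^ (2 - θ) := by
    rw [← Real.mul_rpow hz hx.le, hzx]
  have hy_mul : y * x ^ (1 - θ) = z * x ^ (2 - θ) := by
    rw [← hzx, show 2 - θ = 1 + (1 - θ) by ring, Real.rpow_add hx, Real.rpow_one]
    ring
  rw [hy_rpow, mul_assoc ((2 - θ) / (θ - 1)), hy_mul]
  set X := x ^ (2 - θ)
  set Z := z ^ (2 - θ)
  have hX : 0 < X := Real.rpow_pos_of_pos hx _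
  have hcθ : 0 ≤ 1 - c * (θ - 1) := by nlinarith
  -- `c ≤ 1` lets the AM–GM gap, scaled by `1 - c (θ - 1)`, absorb the `c`-terms.
  have hgap : 0 ≤ (θ - 1) * (1 - c * (θ - 1)) + (2 - θ) * z - (1 - c * (θ - 1)) * Z := by
    nlinarith [mul_le_mul_of_nonneg_left hamgm hcθ,
      mul_nonneg (mul_nonneg hc0 (by linarith : 0 ≤ θ - 1)) (mul_nonneg (by linarith : 0 ≤ 2 - θ) hz)]
  have : θ - 1 ≠ 0 := by linarith
  rw [← sub_nonneg]
  have hexpand : X - Z * X / (θ - 1) + (2 - θ) / (θ - 1) * (z * X) + c * (Z * X) - (θ - 1) * c * X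
      = ((θ - 1) * (1 - c * (θ - 1)) + (2 - θ) * z - (1 - c * (θ - 1)) * Z) * X / (θ - 1) := by
    field_simp
    ring
  rw [hexpand]
  exact div_nonneg (mul_nonneg hgap hX.le) (by linarith)

lemma mul_rpow_le_integral_add {θ a b c : ℝ} (hθ : θ ∈ Ico 1 2) (hab : a < b) (hb : b < 1)
    (hc0 : 0 ≤ c) (hc1 : c ≤ 1) :
    (θ - 1) * c * (1 - a) ^ (2 - θ) ≤
      (∫ s in a..b, (b - s) * ((2 - θ) * (1 - s) ^ (-θ))) + c * (1 - b) ^ (2 - θ) := by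
  obtain ⟨hθ1, hθ2⟩ := hθ
  rcases hθ1.eq_or_lt with rfl | hθ1
  · have hint : 0 ≤ ∫ s in a..b, (b - s) * ((2 - 1) * (1 - s) ^ (-1 : ℝ)) :=
      intervalIntegral.integral_nonneg hab.le fun s hs ↦
        mul_nonneg (by linarith [hs.2]) (mul_nonneg (by norm_num)
          (Real.rpow_nonneg (by linarith [hs.2]) _))
    have := mul_nonneg hc0 (Real.rpow_nonneg (by linarith : 0 ≤ 1 - b) (2 - 1))
    simp only [sub_self, zero_mul]
    linarith
  · rw [integral_sub_mul_weight hθ1.ne' hθ2.ne hab.le hb]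
    exact mul_rpow_le_of_weighted_amgm hθ1 hθ2 (by linarith) (by linarith) hc0 hc1

lemma pow_mul_rpow_le_sum_integral {θ : ℝ} (hθ : θ ∈ Ico 1 2) {k : ℕ} (hk : 1 ≤ k)
    {t : ℕ → ℝ} (ht : ∀ i < k, t i < t (i + 1)) (htk : t k = 1) :
    (θ - 1) ^ (k - 1) * (1 - t 0) ^ (2 - θ) ≤
      ∑ i ∈ Finset.range k, ∫ s in t i..t (i + 1), (t (i + 1) - s) * ((2 - θ) * (1 - s) ^ (-θ)) := by
  induction k, hk using Nat.le_induction generalizing t with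
  | base =>
    rw [Finset.sum_range_one, htk, integral_one_sub_mul_weight hθ.2 (htk ▸ ht 0 one_pos).le]
    simp
  | succ k hk ih =>
    have hmono := strictMonoOn_Iic_of_lt_succ (n := k + 1) ht
    have ht1 : t 1 < 1 := htk ▸ hmono (by simp) (by simp) (by omega)
    have htail := ih (t := fun i ↦ t (i + 1)) (fun i hi ↦ ht (i + 1) (by omega)) htk
    have hstep := mul_rpow_le_integral_add (c := (θ - 1) ^ (k - 1)) hθ (ht 0 (by omega)) ht1
      (pow_nonneg (by linarith [hθ.1]) (k - 1)) (pow_le_one₀ (by linarith [hθ.1]) (by linarith [hθ.2]))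
    rw [Finset.sum_range_succ', show k + 1 - 1 = k - 1 + 1 by omega, pow_succ']
    simp only [zero_add] at hstep htail ⊢
    linarith

theorem stmt7 (θ : ℝ) (hθ : θ ∈ Ico (1 : ℝ) 2) (n : ℕ) (hn : 1 ≤ n)
    (t : ℕ → ℝ) (ht : IsPartition n t) :
    (θ - 1) ^ (n - 1) ≤
      ∑ i ∈ Finset.range n,
        ∫ s in (t i)..(t (i + 1)), (t (i + 1) - s) * ((2 - θ) * (1 - s) ^ (-θ)) := by
  obtain ⟨ht0, htn, hinc⟩ := ht
  simpa [ht0] using pow_mul_rpow_le_sum_integral hθ hn hinc htn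
end

section
/- Let α ∈ (1/2, 1) and suppose H : [0,1) → [0,∞) is increasing with H(t) ≤ c₁ (1 − log(1−t))^{−α}/(1−t) for all t ∈ [0,1) and some c₁ ≥ 1. Then there is c = c(α, c₁) ≥ 1 such that Aₙ(H) ≤ c / √(n^{2α−1}) for all n ∈ ℕ. -/
open MeasureTheory Set

/-!
Work in log-time `u(s) = 1 - log (1 - s)`, for which `ds / (1 - s) = du`. The growth bound
reads `((1 - s) H(s))² ≤ c₁² u(s)^(-2α)`. On a cell `[a, b]` with `b < 1` the weight `b - s` is
at most `(u(b) - u(a)) (1 - s)`, so the cell contributes at most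
`c₁² ((u(b) - u(a)) u(a)^(-α))²`, while the last cell `[a, 1]` contributes at most
`c₁² u(a)^(1 - 2α) / (2α - 1)`. Placing the knots at log-times `(1 + i n^(-α))^(1 / (1 - α))`
makes every inner cell `O(n^(-2α))` and puts the last inner knot at log-time at least `n`, so the
total is `O(n^(1 - 2α))`.
-/
open Real Filter

lemma rpow_add_sub_rpow_le {y h p : ℝ} (hy : 0 < y) (hh : 0 ≤ h) (hp : 1 ≤ p) :
    (y + h) ^ p - y ^ p ≤ p * (y + h) ^ (p - 1) * h := by
  have hyh : 0 < y + h := by linarith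
  have hbern := one_add_mul_self_le_rpow_one_add
    (neg_le_neg ((div_le_one hyh).2 (by linarith) : h / (y + h) ≤ 1)) hp
  rw [show 1 + -(h / (y + h)) = y / (y + h) by field_simp; ring, div_rpow hy.le hyh.le,
    le_div_iff₀ (rpow_pos_of_pos hyh p)] at hbern
  rw [rpow_sub_one hyh.ne']
  have : p * ((y + h) ^ p / (y + h)) * h = p * (h / (y + h)) * (y + h) ^ p := by
    field_simp
  nlinarith

lemma intervalIntegral_mono_of_nonneg {f g : ℝ → ℝ} {a b : ℝ} (hab : a ≤ b)
    (hf : ∀ x ∈ Ioc a b, 0 ≤ f x) (hfg : ∀ x ∈ Ioc a b, f x ≤ g x)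
    (hg : IntervalIntegrable g volume a b) :
    ∫ x in a..b, f x ≤ ∫ x in a..b, g x := by
  rw [intervalIntegral.integral_of_le hab, intervalIntegral.integral_of_le hab]
  exact setIntegral_mono_of_nonneg hf hfg hg.1

lemma intervalIntegral_le_of_forall_lt {f : ℝ → ℝ} {a b C : ℝ} (hab : a < b)
    (hf : ∀ x ∈ Icc a b, 0 ≤ f x) (hC : ∀ c ∈ Ioo a b, ∫ x in a..c, f x ≤ C) :
    ∫ x in a..b, f x ≤ C := by
  by_cases hint : IntervalIntegrable f volume a b
  · have hcont : ContinuousWithinAt (fun c => ∫ x in a..c, f x) (Icc a b) b := by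
      have := intervalIntegral.continuousOn_primitive_interval' hint left_mem_uIcc
      rw [uIcc_of_le hab.le] at this
      exact this b (right_mem_Icc.2 hab.le)
    exact le_of_tendsto (hcont.mono_of_mem_nhdsWithin
      (mem_of_superset (Ioo_mem_nhdsLT hab) Ioo_subset_Icc_self))
      (eventually_of_mem (Ioo_mem_nhdsLT hab) hC)
  · rw [intervalIntegral.integral_undef hint]
    have hmid : (a + b) / 2 ∈ Ioo a b := ⟨by linarith, by linarith⟩
    exact (intervalIntegral.integral_nonneg hmid.1.le
      fun x hx => hf x ⟨hx.1, hx.2.trans hmid.2.le⟩).trans (hC _ hmid)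

noncomputable def logTime (s : ℝ) : ℝ := 1 - log (1 - s)

lemma logTime_one_sub_exp (v : ℝ) : logTime (1 - exp (1 - v)) = v := by
  simp [logTime]

lemma logTime_le_logTime {s t : ℝ} (hst : s ≤ t) (ht : t < 1) : logTime s ≤ logTime t := by
  have := log_le_log (by linarith) (by linarith : 1 - t ≤ 1 - s)
  unfold logTime; linarith

lemma one_le_logTime {s : ℝ} (hs₀ : 0 ≤ s) (hs₁ : s < 1) : 1 ≤ logTime s := by
  simpa [logTime] using logTime_le_logTime hs₀ hs₁

lemma hasDerivAt_logTime {s : ℝ} (hs : s < 1) : HasDerivAt logTime (1 - s)⁻¹ s := by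
  have := (((hasDerivAt_id s).const_sub 1).log (by simp; linarith)).const_sub 1
  exact this.congr_deriv (by simp [neg_div])

lemma div_one_sub_le_logTime_sub {a b : ℝ} (hab : a ≤ b) (hb : b < 1) :
    (b - a) / (1 - a) ≤ logTime b - logTime a := by
  have h1a : 0 < 1 - a := by linarith
  have := log_le_sub_one_of_pos (div_pos (by linarith : 0 < 1 - b) h1a)
  rw [log_div (by linarith) h1a.ne'] at this
  have : (1 - b) / (1 - a) = 1 - (b - a) / (1 - a) := by field_simp; ring
  unfold logTime; linarith

lemma continuousOn_inv_one_sub {a b : ℝ} (hab : a ≤ b) (hb : b < 1) :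
    ContinuousOn (fun s => (1 - s)⁻¹) (uIcc a b) := fun s hs => by
  rw [uIcc_of_le hab] at hs
  exact ((continuous_const.sub continuous_id).continuousAt.inv₀
    (by simp; linarith [hs.2])).continuousWithinAt

lemma integral_inv_one_sub {a b : ℝ} (hab : a ≤ b) (hb : b < 1) :
    ∫ s in a..b, (1 - s)⁻¹ = logTime b - logTime a := by
  refine intervalIntegral.integral_eq_sub_of_hasDerivAt (fun s hs => hasDerivAt_logTime ?_)
    (continuousOn_inv_one_sub hab hb).intervalIntegrable
  rw [uIcc_of_le hab] at hs
  exact hs.2.trans_lt hb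

section RpowLogTime

variable {r a b : ℝ}

lemma continuousOn_logTime_rpow (ha : 0 ≤ a) (hab : a ≤ b) (hb : b < 1) :
    ContinuousOn (fun s => logTime s ^ r) (uIcc a b) := by
  intro s hs
  rw [uIcc_of_le hab] at hs
  have := one_le_logTime (ha.trans hs.1) (hs.2.trans_lt hb)
  exact ((hasDerivAt_logTime (hs.2.trans_lt hb)).continuousAt.rpow_const
    (Or.inl (by positivity))).continuousWithinAt

lemma intervalIntegrable_logTime_rpow_mul_inv_one_sub (ha : 0 ≤ a) (hab : a ≤ b) (hb : b < 1) :
    IntervalIntegrable (fun s => logTime s ^ r * (1 - s)⁻¹) volume a b :=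
  ((continuousOn_logTime_rpow ha hab hb).mul (continuousOn_inv_one_sub hab hb)).intervalIntegrable

lemma integral_logTime_rpow_mul_inv_one_sub (hr : r ≠ -1) (ha : 0 ≤ a) (hab : a ≤ b) (hb : b < 1) :
    ∫ s in a..b, logTime s ^ r * (1 - s)⁻¹ =
      (logTime b ^ (r + 1) - logTime a ^ (r + 1)) / (r + 1) := by
  have hsub : ∀ s ∈ uIcc a b, s < 1 := fun s hs => by
    rw [uIcc_of_le hab] at hs; exact hs.2.trans_lt hb
  have hg : ContinuousOn (fun v : ℝ => v ^ r) (logTime '' uIcc a b) := by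
    rintro _ ⟨s, hs, rfl⟩
    have := one_le_logTime (ha.trans (uIcc_of_le hab ▸ hs).1) (hsub s hs)
    exact (continuousAt_rpow_const _ _ (Or.inl (by positivity))).continuousWithinAt
  have hua := one_le_logTime ha (hab.trans_lt hb)
  rw [← integral_rpow (Or.inr ⟨hr, fun h0 => ?_⟩)]
  · exact intervalIntegral.integral_comp_mul_deriv' (fun s hs => hasDerivAt_logTime (hsub s hs))
      (continuousOn_inv_one_sub hab hb) hg
  · rw [uIcc_of_le (logTime_le_logTime hab hb)] at h0
    linarith [h0.1]

end RpowLogTime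

section GrowthBound

variable {α c : ℝ} {H : ℝ → ℝ}

lemma sq_one_sub_mul_le_of_le {s : ℝ} (hs : s ∈ Ico (0 : ℝ) 1) (hpos : 0 ≤ H s)
    (hH : H s ≤ c * (logTime s ^ (-α) / (1 - s))) :
    ((1 - s) * H s) ^ 2 ≤ c ^ 2 * logTime s ^ (-(2 * α)) := by
  have h1s : 0 < 1 - s := by linarith [hs.2]
  have hle : (1 - s) * H s ≤ c * logTime s ^ (-α) := by
    rwa [mul_div_assoc', le_div_iff₀ h1s, mul_comm] at hH
  calc ((1 - s) * H s) ^ 2 ≤ (c * logTime s ^ (-α)) ^ 2 :=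
        pow_le_pow_left₀ (mul_nonneg h1s.le hpos) hle 2
    _ = c ^ 2 * logTime s ^ (-(2 * α)) := by
        rw [mul_pow, ← rpow_mul_natCast (by linarith [one_le_logTime hs.1 hs.2])]
        ring_nf

lemma integral_sub_mul_sq_le (hα : 0 ≤ α)
    (hsq : ∀ s ∈ Ico (0 : ℝ) 1, ((1 - s) * H s) ^ 2 ≤ c ^ 2 * logTime s ^ (-(2 * α)))
    {a b : ℝ} (ha : 0 ≤ a) (hab : a ≤ b) (hb : b < 1) :
    ∫ s in a..b, (b - s) * H s ^ 2 ≤ c ^ 2 * ((logTime b - logTime a) * logTime a ^ (-α)) ^ 2 := by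
  have h1a : 0 < 1 - a := by linarith
  have hua : 0 < logTime a := by linarith [one_le_logTime ha (hab.trans_lt hb)]
  set w := (b - a) / (1 - a)
  have hw := div_one_sub_le_logTime_sub hab hb
  have hw₀ : 0 ≤ w := div_nonneg (by linarith) h1a.le
  have hpt : ∀ s ∈ Ioc a b,
      (b - s) * H s ^ 2 ≤ w * c ^ 2 * logTime a ^ (-(2 * α)) * (1 - s)⁻¹ := by
    intro s hs
    have h1s : 0 < 1 - s := by linarith [hs.2]
    have hweight : b - s ≤ w * (1 - s) := by
      rw [div_mul_eq_mul_div, le_div_iff₀ h1a]; nlinarith [hs.1]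
    have hdecay : logTime s ^ (-(2 * α)) ≤ logTime a ^ (-(2 * α)) :=
      rpow_le_rpow_of_nonpos hua (logTime_le_logTime hs.1.le (hs.2.trans_lt hb)) (by linarith)
    have hsq_s := hsq s ⟨ha.trans hs.1.le, hs.2.trans_lt hb⟩
    calc (b - s) * H s ^ 2 ≤ w * (1 - s) * H s ^ 2 := by gcongr
      _ = w * ((1 - s) * H s) ^ 2 * (1 - s)⁻¹ := by field_simp
      _ ≤ w * (c ^ 2 * logTime a ^ (-(2 * α))) * (1 - s)⁻¹ := by
          gcongr
          exact hsq_s.trans (by gcongr)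
      _ = w * c ^ 2 * logTime a ^ (-(2 * α)) * (1 - s)⁻¹ := by ring
  calc ∫ s in a..b, (b - s) * H s ^ 2
      ≤ ∫ s in a..b, w * c ^ 2 * logTime a ^ (-(2 * α)) * (1 - s)⁻¹ := by
        refine intervalIntegral_mono_of_nonneg hab (fun s hs => ?_) hpt ?_
        · exact mul_nonneg (by linarith [hs.2]) (sq_nonneg _)
        · exact (continuousOn_inv_one_sub hab hb).intervalIntegrable.const_mul _
    _ = w * c ^ 2 * logTime a ^ (-(2 * α)) * (logTime b - logTime a) := by
        rw [intervalIntegral.integral_const_mul, integral_inv_one_sub hab hb]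
    _ ≤ (logTime b - logTime a) * c ^ 2 * logTime a ^ (-(2 * α)) * (logTime b - logTime a) := by
        gcongr
        linarith [logTime_le_logTime hab hb]
    _ = c ^ 2 * ((logTime b - logTime a) * logTime a ^ (-α)) ^ 2 := by
        rw [mul_pow (logTime b - logTime a), ← rpow_mul_natCast hua.le]
        ring_nf

lemma integral_one_sub_mul_sq_le (hα : 1 / 2 < α)
    (hsq : ∀ s ∈ Ico (0 : ℝ) 1, ((1 - s) * H s) ^ 2 ≤ c ^ 2 * logTime s ^ (-(2 * α)))
    {a : ℝ} (ha : 0 ≤ a) (ha₁ : a < 1) :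
    ∫ s in a..1, (1 - s) * H s ^ 2 ≤ c ^ 2 * logTime a ^ (1 - 2 * α) / (2 * α - 1) := by
  refine intervalIntegral_le_of_forall_lt ha₁
    (fun s hs => mul_nonneg (by linarith [hs.2]) (sq_nonneg _)) fun b hb => ?_
  have hab : a ≤ b := hb.1.le
  have hpt : ∀ s ∈ Ioc a b, (1 - s) * H s ^ 2 ≤ c ^ 2 * (logTime s ^ (-(2 * α)) * (1 - s)⁻¹) := by
    intro s hs
    have h1s : 0 < 1 - s := by linarith [hs.2, hb.2]
    calc (1 - s) * H s ^ 2 = ((1 - s) * H s) ^ 2 * (1 - s)⁻¹ := by field_simp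
      _ ≤ c ^ 2 * logTime s ^ (-(2 * α)) * (1 - s)⁻¹ := by
          gcongr; exact hsq s ⟨ha.trans hs.1.le, hs.2.trans_lt hb.2⟩
      _ = c ^ 2 * (logTime s ^ (-(2 * α)) * (1 - s)⁻¹) := by ring
  have hub := one_le_logTime (ha.trans hab) hb.2
  have h2α : 0 < 2 * α - 1 := by linarith
  calc ∫ s in a..b, (1 - s) * H s ^ 2
      ≤ ∫ s in a..b, c ^ 2 * (logTime s ^ (-(2 * α)) * (1 - s)⁻¹) :=
        intervalIntegral_mono_of_nonneg hab
          (fun s hs => mul_nonneg (by linarith [hs.2, hb.2]) (sq_nonneg _)) hpt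
          ((intervalIntegrable_logTime_rpow_mul_inv_one_sub ha hab hb.2).const_mul _)
    _ = c ^ 2 * (logTime a ^ (1 - 2 * α) - logTime b ^ (1 - 2 * α)) / (2 * α - 1) := by
        rw [intervalIntegral.integral_const_mul,
          integral_logTime_rpow_mul_inv_one_sub (by linarith) ha hab hb.2,
          show -(2 * α) + 1 = 1 - 2 * α by ring, ← neg_div_neg_eq, neg_sub, neg_sub, mul_div_assoc]
    _ ≤ c ^ 2 * logTime a ^ (1 - 2 * α) / (2 * α - 1) := by
        gcongr
        exact sub_le_self _ (rpow_nonneg (by linarith) _)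

end GrowthBound

section LogPartition

variable {α : ℝ} {n : ℕ}

variable (α n) in
noncomputable def knot (i : ℕ) : ℝ := (1 + i * (n : ℝ) ^ (-α)) ^ (1 - α)⁻¹

lemma knot_succ_sub_mul_le (hα₀ : 0 ≤ α) (hα₁ : α < 1) (hn : 1 ≤ n) (i : ℕ) :
    (knot α n (i + 1) - knot α n i) * knot α n i ^ (-α) ≤
      (1 - α)⁻¹ * 2 ^ ((1 - α)⁻¹ - 1) * (n : ℝ) ^ (-α) := by
  set γ := (1 - α)⁻¹
  set h := (n : ℝ) ^ (-α)
  set y := 1 + i * h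
  have hγ : 1 ≤ γ := one_le_inv₀ (by linarith) |>.2 (by linarith)
  have hh : 0 ≤ h := rpow_nonneg (Nat.cast_nonneg n) _
  have hh₁ : h ≤ 1 := rpow_le_one_of_one_le_of_nonpos (by exact_mod_cast hn) (by linarith)
  have hy : 1 ≤ y := by simp only [y]; nlinarith [(Nat.cast_nonneg i : (0 : ℝ) ≤ i)]
  have hsucc : knot α n (i + 1) = (y + h) ^ γ := by
    simp only [knot, y, h, γ]; push_cast; ring_nf
  have hknot : knot α n i ^ (-α) = y ^ (1 - γ) := by
    rw [knot, ← rpow_mul (by linarith)]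
    congr 1
    have : 1 - α ≠ 0 := by linarith
    simp only [γ]; field_simp; ring
  have hdouble : (y + h) ^ (γ - 1) ≤ 2 ^ (γ - 1) * y ^ (γ - 1) := by
    rw [← mul_rpow zero_le_two (by linarith)]
    exact rpow_le_rpow (by linarith) (by linarith) (by linarith)
  have hcancel : y ^ (γ - 1) * y ^ (1 - γ) = 1 := by
    rw [← rpow_add (by linarith)]; simp
  rw [hsucc, hknot]
  calc ((y + h) ^ γ - y ^ γ) * y ^ (1 - γ)
      ≤ γ * (2 ^ (γ - 1) * y ^ (γ - 1)) * h * y ^ (1 - γ) := by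
        gcongr
        exact (rpow_add_sub_rpow_le (by linarith) hh hγ).trans (by gcongr)
    _ = γ * 2 ^ (γ - 1) * h * (y ^ (γ - 1) * y ^ (1 - γ)) := by ring
    _ = γ * 2 ^ (γ - 1) * h := by rw [hcancel, mul_one]

lemma knot_zero : knot α n 0 = 1 := by simp [knot]

lemma knot_strictMono (hα₁ : α < 1) (hn : 1 ≤ n) : StrictMono (knot α n) := fun i j hij => by
  have hh : 0 < (n : ℝ) ^ (-α) := rpow_pos_of_pos (by exact_mod_cast hn) _
  have hi : (i : ℝ) < j := by exact_mod_cast hij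
  exact rpow_lt_rpow (by positivity) (by gcongr) (inv_pos.2 (by linarith))

lemma one_le_knot (hα₁ : α < 1) (hn : 1 ≤ n) (i : ℕ) : 1 ≤ knot α n i := by
  simpa [knot_zero] using (knot_strictMono hα₁ hn).monotone (Nat.zero_le i)

lemma natCast_le_knot (hα₀ : 0 ≤ α) (hα₁ : α < 1) (m : ℕ) :
    ((m + 1 : ℕ) : ℝ) ≤ knot α (m + 1) m := by
  set N : ℝ := ((m + 1 : ℕ) : ℝ)
  have hN : 1 ≤ N := by simp [N]
  have hh : N ^ (-α) ≤ 1 := rpow_le_one_of_one_le_of_nonpos hN (by linarith)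
  have hbase : N ^ (1 - α) ≤ 1 + m * N ^ (-α) := by
    have hNm : N = m + 1 := by simp [N]
    calc N ^ (1 - α) = m * N ^ (-α) + N ^ (-α) := by
          rw [sub_eq_add_neg, rpow_add (by linarith), rpow_one, hNm]; ring
      _ ≤ 1 + m * N ^ (-α) := by linarith
  calc N = (N ^ (1 - α)) ^ (1 - α)⁻¹ := by
        rw [← rpow_mul (by linarith), mul_inv_cancel₀ (by linarith), rpow_one]
    _ ≤ knot α (m + 1) m := rpow_le_rpow (by positivity) hbase (inv_nonneg.2 (by linarith))

variable (α n) in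
noncomputable def logPartition (i : ℕ) : ℝ := if i < n then 1 - exp (1 - knot α n i) else 1

lemma logTime_logPartition {i : ℕ} (hi : i < n) : logTime (logPartition α n i) = knot α n i := by
  rw [logPartition, if_pos hi, logTime_one_sub_exp]

lemma logPartition_mem_Ico (hα₁ : α < 1) (hn : 1 ≤ n) {i : ℕ} (hi : i < n) :
    logPartition α n i ∈ Ico (0 : ℝ) 1 := by
  rw [logPartition, if_pos hi]
  exact ⟨by linarith [exp_le_one_iff.2 (by linarith [one_le_knot hα₁ hn i] : 1 - knot α n i ≤ 0)],
    by linarith [exp_pos (1 - knot α n i)]⟩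

lemma isPartition_logPartition (hα₁ : α < 1) (hn : 1 ≤ n) : IsPartition n (logPartition α n) := by
  refine ⟨by simp [logPartition, knot_zero, Nat.one_le_iff_ne_zero.1 hn], by simp [logPartition],
    fun i hi => ?_⟩
  rw [logPartition, if_pos hi, logPartition]
  split_ifs with h
  · have := knot_strictMono hα₁ hn (Nat.lt_succ_self i)
    linarith [exp_lt_exp.2 (by linarith : 1 - knot α n (i + 1) < 1 - knot α n i)]
  · linarith [exp_pos (1 - knot α n i)]

end LogPartition

section CellBounds

variable {α c : ℝ} {H : ℝ → ℝ}

lemma integral_logPartition_inner_le (hα₀ : 0 ≤ α) (hα₁ : α < 1)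
    (hsq : ∀ s ∈ Ico (0 : ℝ) 1, ((1 - s) * H s) ^ 2 ≤ c ^ 2 * logTime s ^ (-(2 * α)))
    {n i : ℕ} (hn : 1 ≤ n) (hi : i + 1 < n) :
    ∫ s in logPartition α n i..logPartition α n (i + 1),
        (logPartition α n (i + 1) - s) * H s ^ 2 ≤
      c ^ 2 * ((1 - α)⁻¹ * 2 ^ ((1 - α)⁻¹ - 1) * (n : ℝ) ^ (-α)) ^ 2 := by
  refine (integral_sub_mul_sq_le hα₀ hsq (logPartition_mem_Ico hα₁ hn (by omega)).1
    ((isPartition_logPartition hα₁ hn).2.2 i (by omega)).le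
    (logPartition_mem_Ico hα₁ hn hi).2).trans ?_
  rw [logTime_logPartition hi, logTime_logPartition (by omega)]
  have hmono := (knot_strictMono hα₁ hn).monotone (Nat.le_succ i)
  have := one_le_knot hα₁ hn i
  exact mul_le_mul_of_nonneg_left (pow_le_pow_left₀
    (mul_nonneg (by linarith) (rpow_nonneg (by linarith) _))
    (knot_succ_sub_mul_le hα₀ hα₁ hn i) 2) (sq_nonneg c)

lemma integral_logPartition_last_le (hα : α ∈ Ioo (1 / 2 : ℝ) 1)
    (hsq : ∀ s ∈ Ico (0 : ℝ) 1, ((1 - s) * H s) ^ 2 ≤ c ^ 2 * logTime s ^ (-(2 * α)))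
    (m : ℕ) :
    ∫ s in logPartition α (m + 1) m..logPartition α (m + 1) (m + 1),
        (logPartition α (m + 1) (m + 1) - s) * H s ^ 2 ≤
      c ^ 2 * (2 * α - 1)⁻¹ * ((m + 1 : ℕ) : ℝ) ^ (1 - 2 * α) := by
  obtain ⟨hα₀, hα₁⟩ := hα
  have hm := logPartition_mem_Ico hα₁ (Nat.le_add_left 1 m) (Nat.lt_succ_self m)
  rw [show logPartition α (m + 1) (m + 1) = 1 by simp [logPartition]]
  refine (integral_one_sub_mul_sq_le hα₀ hsq hm.1 hm.2).trans ?_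
  rw [logTime_logPartition (Nat.lt_succ_self m), div_eq_mul_inv, mul_right_comm]
  exact mul_le_mul_of_nonneg_left
    (rpow_le_rpow_of_nonpos (by positivity) (natCast_le_knot (by linarith) hα₁ m) (by linarith))
    (mul_nonneg (sq_nonneg c) (inv_nonneg.2 (by linarith)))

lemma partErr_logPartition_le (hα : α ∈ Ioo (1 / 2 : ℝ) 1)
    (hsq : ∀ s ∈ Ico (0 : ℝ) 1, ((1 - s) * H s) ^ 2 ≤ c ^ 2 * logTime s ^ (-(2 * α)))
    {n : ℕ} (hn : 1 ≤ n) :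
    partErr H n (logPartition α n) ≤
      c ^ 2 * (((1 - α)⁻¹ * 2 ^ ((1 - α)⁻¹ - 1)) ^ 2 + (2 * α - 1)⁻¹) /
        (n : ℝ) ^ (2 * α - 1) := by
  obtain ⟨m, rfl⟩ : ∃ m, n = m + 1 := ⟨n - 1, by omega⟩
  set K := (1 - α)⁻¹ * 2 ^ ((1 - α)⁻¹ - 1)
  set N : ℝ := ((m + 1 : ℕ) : ℝ)
  have hN : 0 < N := by positivity
  have hpow : N * (N ^ (-α)) ^ 2 = N ^ (1 - 2 * α) := by
    rw [← rpow_mul_natCast hN.le, show 1 - 2 * α = 1 + -α * (2 : ℕ) by push_cast; ring,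
      rpow_add hN, rpow_one]
  have hm : (m : ℝ) ≤ N := by simp [N]
  calc partErr H (m + 1) (logPartition α (m + 1))
      ≤ m * (c ^ 2 * (K * N ^ (-α)) ^ 2) + c ^ 2 * (2 * α - 1)⁻¹ * N ^ (1 - 2 * α) := by
        rw [partErr, Finset.sum_range_succ]
        gcongr
        · calc _ ≤ ∑ _i ∈ Finset.range m, c ^ 2 * (K * N ^ (-α)) ^ 2 :=
                Finset.sum_le_sum fun i hi =>
                  integral_logPartition_inner_le (by linarith [hα.1]) hα.2 hsq hn
                    (by simpa using hi)
            _ = m * (c ^ 2 * (K * N ^ (-α)) ^ 2) := by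
                rw [Finset.sum_const, Finset.card_range, nsmul_eq_mul]
        · exact integral_logPartition_last_le hα hsq m
    _ ≤ N * (c ^ 2 * (K * N ^ (-α)) ^ 2) + c ^ 2 * (2 * α - 1)⁻¹ * N ^ (1 - 2 * α) := by
        gcongr
    _ = c ^ 2 * (K ^ 2 + (2 * α - 1)⁻¹) * N ^ (1 - 2 * α) := by
        rw [← hpow]; ring
    _ = c ^ 2 * (K ^ 2 + (2 * α - 1)⁻¹) / N ^ (2 * α - 1) := by
        rw [div_eq_mul_inv, ← rpow_neg hN.le, neg_sub]

end CellBounds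

lemma An_le_sqrt_partErr {H : ℝ → ℝ} {n : ℕ} {t : ℕ → ℝ} (ht : IsPartition n t) :
    An H n ≤ Real.sqrt (partErr H n t) :=
  csInf_le ⟨0, by rintro _ ⟨t, -, rfl⟩; exact Real.sqrt_nonneg _⟩ ⟨t, ht, rfl⟩

theorem stmt13_general (α : ℝ) (hα : α ∈ Ioo (1 / 2 : ℝ) 1) (c₁ : ℝ) (H : ℝ → ℝ)
    (hpos : ∀ t ∈ Ico (0 : ℝ) 1, 0 ≤ H t)
    (hH : ∀ t ∈ Ico (0 : ℝ) 1, H t ≤ c₁ * ((1 - Real.log (1 - t)) ^ (-α) / (1 - t))) :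
    ∃ c : ℝ, 1 ≤ c ∧ ∀ n : ℕ, 1 ≤ n → An H n ≤ c / Real.sqrt ((n : ℝ) ^ (2 * α - 1)) := by
  have hsq : ∀ s ∈ Ico (0 : ℝ) 1, ((1 - s) * H s) ^ 2 ≤ c₁ ^ 2 * logTime s ^ (-(2 * α)) :=
    fun s hs => sq_one_sub_mul_le_of_le hs (hpos s hs) (hH s hs)
  set C := c₁ ^ 2 * (((1 - α)⁻¹ * 2 ^ ((1 - α)⁻¹ - 1)) ^ 2 + (2 * α - 1)⁻¹)
  refine ⟨max 1 (Real.sqrt C), le_max_left _ _, fun n hn => ?_⟩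
  calc An H n ≤ Real.sqrt (partErr H n (logPartition α n)) :=
        An_le_sqrt_partErr (isPartition_logPartition hα.2 hn)
    _ ≤ Real.sqrt (C / (n : ℝ) ^ (2 * α - 1)) :=
        Real.sqrt_le_sqrt (partErr_logPartition_le hα hsq hn)
    _ = Real.sqrt C / Real.sqrt ((n : ℝ) ^ (2 * α - 1)) := Real.sqrt_div' _ (by positivity)
    _ ≤ max 1 (Real.sqrt C) / Real.sqrt ((n : ℝ) ^ (2 * α - 1)) := by
        gcongr; exact le_max_right _ _

theorem stmt13 (α : ℝ) (hα : α ∈ Ioo (1 / 2 : ℝ) 1) (c₁ : ℝ) (hc₁ : 1 ≤ c₁)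
    (H : ℝ → ℝ) (hmono : MonotoneOn H (Ico (0 : ℝ) 1))
    (hpos : ∀ t ∈ Ico (0 : ℝ) 1, 0 ≤ H t)
    (hH : ∀ t ∈ Ico (0 : ℝ) 1, H t ≤ c₁ * ((1 - Real.log (1 - t)) ^ (-α) / (1 - t))) :
    ∃ c : ℝ, 1 ≤ c ∧ ∀ n : ℕ, 1 ≤ n → An H n ≤ c / Real.sqrt ((n : ℝ) ^ (2 * α - 1)) :=
  stmt13_general α hα c₁ H hpos hH
end

section
/- Let α ∈ (1/2,1), c₁ ≥ 1, H increasing with H(t) ≤ c₁(1−log(1−t))^{−α}/(1−t), and set T = 1 − e^{c_α(n)} where c_α(n) = 1 − ((1−α)n^{1−α} + 1)^{1/(1−α)}. Then ∫₀ᵀ H(t) dt ≤ c₁ n^{1−α} and ∫_T¹ (1−t)H(t)² dt ≤ c₁² (1−α)^{(1−2α)/(1−α)}/(2α−1) · n^{1−2α}. -/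
open MeasureTheory Set

/-!
Both bounds come from integrating the majorant `c₁ u(t)^{-α} / (1 - t)`, where
`u(t) = 1 - log (1 - t)` satisfies `u' = 1 / (1 - t)`, so `u^p / (1 - t)` has the primitive
`u^{p+1} / (p + 1)`. The cut point is chosen so that `u(T) = B` with `B^{1-α} = (1 - α) n^{1-α} + 1`:
the first integral is then exactly `c₁ n^{1-α}`, and the second, an improper integral at `1`
(convergent since `2α > 1`), is at most `c₁² B^{1-2α} / (2α - 1)`.
-/

open Real

lemma one_sub_log_one_sub_pos {t : ℝ} (ht₀ : 1 - exp 1 < t) (ht₁ : t < 1) :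
    0 < 1 - log (1 - t) := by
  have : log (1 - t) < 1 := (log_lt_iff_lt_exp (by linarith)).2 (by linarith)
  linarith

lemma hasDerivAt_one_sub_log_one_sub_rpow (p : ℝ) {t : ℝ} (ht : t < 1)
    (hu : 1 - log (1 - t) ≠ 0) :
    HasDerivAt (fun s => (1 - log (1 - s)) ^ p)
      (p * (1 - log (1 - t)) ^ (p - 1) / (1 - t)) t := by
  have hlog := (((hasDerivAt_id t).const_sub 1).log (sub_ne_zero.2 ht.ne')).const_sub 1
  refine ((hasDerivAt_rpow_const (p := p) (Or.inl hu)).comp t hlog).congr_deriv ?_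
  simp only [id]
  ring

lemma continuousOn_one_sub_log_one_sub_rpow_div (p : ℝ) {a b : ℝ} (ha : 1 - exp 1 < a)
    (hb : b < 1) :
    ContinuousOn (fun t => (1 - log (1 - t)) ^ p / (1 - t)) (Icc a b) := by
  have hne : ∀ t ∈ Icc a b, 1 - t ≠ 0 := fun t ht => by linarith [ht.2]
  refine ContinuousOn.div ?_ (by fun_prop) hne
  refine (continuousOn_const.sub ((continuousOn_const.sub continuousOn_id).log hne)).rpow_const
    fun t ht => Or.inl ?_
  exact (one_sub_log_one_sub_pos (ha.trans_le ht.1) (ht.2.trans_lt hb)).ne'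

lemma integral_one_sub_log_one_sub_rpow_div {p a b : ℝ} (hp : p ≠ -1) (ha : 1 - exp 1 < a)
    (hab : a ≤ b) (hb : b < 1) :
    ∫ t in a..b, (1 - log (1 - t)) ^ p / (1 - t) =
      ((1 - log (1 - b)) ^ (p + 1) - (1 - log (1 - a)) ^ (p + 1)) / (p + 1) := by
  have hp' : p + 1 ≠ 0 := fun h => hp (by linarith)
  rw [sub_div]
  refine intervalIntegral.integral_eq_sub_of_hasDerivAt
    (f := fun t => (1 - log (1 - t)) ^ (p + 1) / (p + 1)) (fun t ht => ?_) ?_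
  · rw [uIcc_of_le hab] at ht
    have hu := one_sub_log_one_sub_pos (ha.trans_le ht.1) (ht.2.trans_lt hb)
    refine ((hasDerivAt_one_sub_log_one_sub_rpow (p + 1) (ht.2.trans_lt hb) hu.ne').div_const
      (p + 1)).congr_deriv ?_
    rw [add_sub_cancel_right]
    field_simp
  · exact (continuousOn_one_sub_log_one_sub_rpow_div p ha hb).intervalIntegrable_of_Icc hab

lemma integral_le_of_le_mul_one_sub_log_one_sub_rpow_div {f : ℝ → ℝ} {c p a b : ℝ}
    (hp : p ≠ -1) (ha : 1 - exp 1 < a) (hab : a ≤ b) (hb : b < 1)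
    (hf : IntervalIntegrable f volume a b)
    (hfg : ∀ t ∈ Icc a b, f t ≤ c * ((1 - log (1 - t)) ^ p / (1 - t))) :
    ∫ t in a..b, f t ≤
      c * (((1 - log (1 - b)) ^ (p + 1) - (1 - log (1 - a)) ^ (p + 1)) / (p + 1)) := by
  have hg : IntervalIntegrable (fun t => c * ((1 - log (1 - t)) ^ p / (1 - t))) volume a b :=
    (continuousOn_const.mul (continuousOn_one_sub_log_one_sub_rpow_div p ha hb)
      ).intervalIntegrable_of_Icc hab
  refine (intervalIntegral.integral_mono_on hab hf hg hfg).trans_eq ?_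
  rw [intervalIntegral.integral_const_mul, integral_one_sub_log_one_sub_rpow_div hp ha hab hb]

lemma intervalIntegral.integral_le_of_forall_Ico_integral_le {f : ℝ → ℝ} {a b C : ℝ}
    (hab : a < b) (hf : IntervalIntegrable f volume a b)
    (h : ∀ x ∈ Ico a b, ∫ t in a..x, f t ≤ C) : ∫ t in a..b, f t ≤ C := by
  have hb : b ∈ Icc a b := right_mem_Icc.2 hab.le
  have hcont := intervalIntegral.continuousOn_primitive_interval' hf
    (by rw [uIcc_of_le hab.le]; exact left_mem_Icc.2 hab.le)
  rw [uIcc_of_le hab.le] at hcont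
  have : (nhdsWithin b (Ico a b)).NeBot := by
    rw [← mem_closure_iff_nhdsWithin_neBot, closure_Ico hab.ne]
    exact hb
  exact le_of_tendsto ((hcont b hb).mono_left (nhdsWithin_mono _ Ico_subset_Icc_self))
    (eventually_mem_nhdsWithin.mono h)

lemma mul_sq_le_of_le_mul_rpow_div {s w h c α : ℝ} (hs : 0 < s) (hw : 0 < w) (h₀ : 0 ≤ h)
    (hh : h ≤ c * (w ^ (-α) / s)) : s * h ^ 2 ≤ c ^ 2 * (w ^ (-(2 * α)) / s) := by
  have hsq : (w ^ (-α)) ^ 2 = w ^ (-(2 * α)) := by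
    rw [← rpow_natCast, ← rpow_mul hw.le]
    ring_nf
  calc s * h ^ 2 ≤ s * (c * (w ^ (-α) / s)) ^ 2 := by gcongr
    _ = c ^ 2 * (w ^ (-(2 * α)) / s) := by
      rw [mul_pow, div_pow, hsq]
      field_simp

lemma integral_one_sub_mul_sq_le_s15 {H : ℝ → ℝ} {c α T : ℝ} (hα : 1 / 2 < α)
    (hT₀ : 1 - exp 1 < T) (hT₁ : T < 1) (hpos : ∀ t ∈ Ico T 1, 0 ≤ H t)
    (hH : ∀ t ∈ Ico T 1, H t ≤ c * ((1 - log (1 - t)) ^ (-α) / (1 - t))) :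
    ∫ t in T..1, (1 - t) * H t ^ 2 ≤ c ^ 2 * (1 - log (1 - T)) ^ (1 - 2 * α) / (2 * α - 1) := by
  have hα' : 0 < 2 * α - 1 := by linarith
  by_cases hint : IntervalIntegrable (fun t => (1 - t) * H t ^ 2) volume T 1
  swap
  · rw [intervalIntegral.integral_undef hint]
    have := one_sub_log_one_sub_pos hT₀ hT₁
    positivity
  refine intervalIntegral.integral_le_of_forall_Ico_integral_le hT₁ hint fun b hb => ?_
  have hTb : Icc T b ⊆ Ico T 1 := Icc_subset_Ico_right hb.2
  have hbound := integral_le_of_le_mul_one_sub_log_one_sub_rpow_div (c := c ^ 2) (p := -(2 * α))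
    (by linarith) hT₀ hb.1 hb.2 (hint.mono_set (by
      rw [uIcc_of_le hb.1, uIcc_of_le hT₁.le]; exact Icc_subset_Icc_right hb.2.le))
    fun t ht => mul_sq_le_of_le_mul_rpow_div (by linarith [(hTb ht).2])
      (one_sub_log_one_sub_pos (hT₀.trans_le ht.1) (hTb ht).2) (hpos t (hTb ht)) (hH t (hTb ht))
  have hub : 0 ≤ (1 - log (1 - b)) ^ (1 - 2 * α) :=
    rpow_nonneg (one_sub_log_one_sub_pos (hT₀.trans_le hb.1) hb.2).le _
  rw [show -(2 * α) + 1 = 1 - 2 * α by ring] at hbound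
  calc _ ≤ _ := hbound
    _ = c ^ 2 * (((1 - log (1 - T)) ^ (1 - 2 * α) - (1 - log (1 - b)) ^ (1 - 2 * α)) /
          (2 * α - 1)) := by rw [← neg_div_neg_eq, neg_sub, neg_sub]
    _ ≤ c ^ 2 * (1 - log (1 - T)) ^ (1 - 2 * α) / (2 * α - 1) := by
      rw [mul_div_assoc]
      gcongr
      linarith

lemma rpow_one_sub_two_mul_le {α x : ℝ} (hα : 1 / 2 ≤ α) (hα₁ : α < 1) (hx : 0 < x) :
    (((1 - α) * x ^ (1 - α) + 1) ^ (1 / (1 - α))) ^ (1 - 2 * α) ≤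
      (1 - α) ^ ((1 - 2 * α) / (1 - α)) * x ^ (1 - 2 * α) := by
  have h₁ : 0 < 1 - α := by linarith
  have hy : 0 < (1 - α) * x ^ (1 - α) := by positivity
  calc (((1 - α) * x ^ (1 - α) + 1) ^ (1 / (1 - α))) ^ (1 - 2 * α)
      = ((1 - α) * x ^ (1 - α) + 1) ^ ((1 - 2 * α) / (1 - α)) := by
        rw [← rpow_mul (by positivity), one_div_mul_eq_div]
    _ ≤ ((1 - α) * x ^ (1 - α)) ^ ((1 - 2 * α) / (1 - α)) :=
        rpow_le_rpow_of_nonpos hy (by linarith) (div_nonpos_of_nonpos_of_nonneg (by linarith) h₁.le)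
    _ = (1 - α) ^ ((1 - 2 * α) / (1 - α)) * x ^ (1 - 2 * α) := by
        rw [mul_rpow h₁.le (by positivity), ← rpow_mul hx.le, mul_div_cancel₀ _ h₁.ne']

theorem stmt15_general (α : ℝ) (hα : α ∈ Ioo (1 / 2 : ℝ) 1) (c₁ : ℝ)
    (H : ℝ → ℝ) (hmono : MonotoneOn H (Ico (0 : ℝ) 1))
    (hpos : ∀ t ∈ Ico (0 : ℝ) 1, 0 ≤ H t)
    (hH : ∀ t ∈ Ico (0 : ℝ) 1, H t ≤ c₁ * ((1 - Real.log (1 - t)) ^ (-α) / (1 - t)))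
    (n : ℕ) (hn : 1 ≤ n) (T : ℝ)
    (hT : T = 1 - Real.exp (1 - ((1 - α) * (n : ℝ) ^ (1 - α) + 1) ^ (1 / (1 - α)))) :
    (∫ t in (0 : ℝ)..T, H t) ≤ c₁ * (n : ℝ) ^ (1 - α) ∧
      (∫ t in T..(1 : ℝ), (1 - t) * H t ^ 2) ≤
        c₁ ^ 2 * (1 - α) ^ ((1 - 2 * α) / (1 - α)) / (2 * α - 1) * (n : ℝ) ^ (1 - 2 * α) := by
  obtain ⟨hα₀, hα₁⟩ := hα
  have hn₀ : (0 : ℝ) < n := by exact_mod_cast hn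
  set X := (1 - α) * (n : ℝ) ^ (1 - α) + 1 with hX
  set B := X ^ (1 / (1 - α)) with hB
  have hX₁ : 1 ≤ X := le_add_of_nonneg_left (mul_nonneg (by linarith) (by positivity))
  have hB₁ : 1 ≤ B := one_le_rpow hX₁ (one_div_nonneg.2 (by linarith))
  have hBX : B ^ (1 - α) = X := by rw [hB, one_div, rpow_inv_rpow (by linarith) (by linarith)]
  have hT₀ : 0 ≤ T := by rw [hT, sub_nonneg]; exact exp_le_one_iff.2 (by linarith)
  have hT₁ : T < 1 := by rw [hT]; linarith [exp_pos (1 - B)]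
  have he : 1 - exp 1 < 0 := by linarith [add_one_lt_exp one_ne_zero]
  have huT : 1 - log (1 - T) = B := by rw [hT, sub_sub_cancel, log_exp]; ring
  have hsub : Icc 0 T ⊆ Ico 0 1 := Icc_subset_Ico_right hT₁
  constructor
  · refine (integral_le_of_le_mul_one_sub_log_one_sub_rpow_div (p := -α) (by linarith) he
      hT₀ hT₁ (hmono.mono (by rwa [uIcc_of_le hT₀])).intervalIntegrable
      fun t ht => hH t (hsub ht)).trans_eq ?_
    rw [huT, sub_zero, log_one, sub_zero, one_rpow, neg_add_eq_sub, hBX, hX, add_sub_cancel_right,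
      mul_div_cancel_left₀ _ (by linarith)]
  · calc ∫ t in T..1, (1 - t) * H t ^ 2 ≤ c₁ ^ 2 * B ^ (1 - 2 * α) / (2 * α - 1) :=
          huT ▸ integral_one_sub_mul_sq_le_s15 hα₀ (he.trans_le hT₀) hT₁
            (fun t ht => hpos t ⟨hT₀.trans ht.1, ht.2⟩) fun t ht => hH t ⟨hT₀.trans ht.1, ht.2⟩
      _ ≤ c₁ ^ 2 * ((1 - α) ^ ((1 - 2 * α) / (1 - α)) * (n : ℝ) ^ (1 - 2 * α)) / (2 * α - 1) := by
          gcongr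
          · linarith
          · exact rpow_one_sub_two_mul_le hα₀.le hα₁ hn₀
      _ = _ := by ring

theorem stmt15 (α : ℝ) (hα : α ∈ Ioo (1 / 2 : ℝ) 1) (c₁ : ℝ) (hc₁ : 1 ≤ c₁)
    (H : ℝ → ℝ) (hmono : MonotoneOn H (Ico (0 : ℝ) 1))
    (hpos : ∀ t ∈ Ico (0 : ℝ) 1, 0 ≤ H t)
    (hH : ∀ t ∈ Ico (0 : ℝ) 1, H t ≤ c₁ * ((1 - Real.log (1 - t)) ^ (-α) / (1 - t)))
    (n : ℕ) (hn : 1 ≤ n) (T : ℝ)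
    (hT : T = 1 - Real.exp (1 - ((1 - α) * (n : ℝ) ^ (1 - α) + 1) ^ (1 / (1 - α)))) :
    (∫ t in (0 : ℝ)..T, H t) ≤ c₁ * (n : ℝ) ^ (1 - α) ∧
      (∫ t in T..(1 : ℝ), (1 - t) * H t ^ 2) ≤
        c₁ ^ 2 * (1 - α) ^ ((1 - 2 * α) / (1 - α)) / (2 * α - 1) * (n : ℝ) ^ (1 - 2 * α) :=
  stmt15_general α hα c₁ H hmono hpos hH n hn T hT
end

section
/- Let β > 1. There exists a constant c = c(β) ≥ 1 such that for all t ∈ [0,1), (1/c)·(1 − log(1−t))^{−β}/(1−t)² ≤ 1 + ∑_{k=2}^∞ k (log k)^{−β} t^k ≤ c·(1 − log(1−t))^{−β}/(1−t)². -/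
open Set

/-- The series `1 + ∑_{k=2}^∞ k (log k)^{−β} t^k` (indexed by `k = j + 2`). -/
noncomputable def logSeries (β t : ℝ) : ℝ :=
  1 + ∑' j : ℕ, ((j : ℝ) + 2) * (Real.log ((j : ℝ) + 2)) ^ (-β) * t ^ (j + 2)

/-! Write `u = 1 - t` and `L = 1 - log u`. The roughly `1 / (4u)` terms with
`1 / (4u) < k ≤ 1 / (2u)` each exceed `L^(-β) / (8u)`, since `log k ≤ L` and Bernoulli's
inequality gives `t^k ≥ 1/2`; this is the lower bound. For the upper bound, terms with
`k ≥ u^(-1/2)` have `log k ≥ L / 4` and sum to at most `4^β L^(-β) ∑ k t^k ≤ 4^β L^(-β) / u²`,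
while the others have `k < u^(-1/2)` and sum to at most `(log 2)^(-β) u^(-3/2)`; this is
`O(L^(-β) / u²)` because `√u · L^β` is bounded on `(0, 1]`. -/

open Real

noncomputable def logSeriesTerm (β t : ℝ) (j : ℕ) : ℝ :=
  ((j : ℝ) + 2) * log ((j : ℝ) + 2) ^ (-β) * t ^ (j + 2)

lemma logSeries_eq (β t : ℝ) : logSeries β t = 1 + ∑' j, logSeriesTerm β t j := rfl

lemma log_nat_add_two_pos (j : ℕ) : 0 < log ((j : ℝ) + 2) :=
  log_pos (by linarith [j.cast_nonneg (α := ℝ)])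

lemma logSeriesTerm_nonneg (β : ℝ) {t : ℝ} (ht : 0 ≤ t) (j : ℕ) :
    0 ≤ logSeriesTerm β t j := by
  have := log_nat_add_two_pos j
  unfold logSeriesTerm
  positivity

lemma one_le_one_sub_log {u : ℝ} (hu₀ : 0 < u) (hu₁ : u ≤ 1) : 1 ≤ 1 - log u := by
  linarith [log_nonpos hu₀.le hu₁]

section GeometricTails

variable {t : ℝ}

lemma summable_pow_add_two (ht₀ : 0 ≤ t) (ht₁ : t < 1) :
    Summable fun j : ℕ => t ^ (j + 2) :=
  (summable_nat_add_iff 2).mpr (summable_geometric_of_lt_one ht₀ ht₁)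

lemma tsum_pow_add_two_le (ht₀ : 0 ≤ t) (ht₁ : t < 1) :
    ∑' j : ℕ, t ^ (j + 2) ≤ 1 / (1 - t) := by
  have h := tsum_comp_le_tsum_of_inj (summable_geometric_of_lt_one ht₀ ht₁)
    (fun n => pow_nonneg ht₀ n) (add_left_injective 2)
  rwa [tsum_geometric_of_lt_one ht₀ ht₁, ← one_div] at h

lemma summable_nat_add_two_mul_pow (ht₀ : 0 ≤ t) (ht₁ : t < 1) :
    Summable fun j : ℕ => ((j : ℝ) + 2) * t ^ (j + 2) := by
  have h := (hasSum_coe_mul_geometric_of_norm_lt_one (𝕜 := ℝ)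
    (by rwa [norm_of_nonneg ht₀])).summable
  exact ((summable_nat_add_iff 2).mpr h).congr fun j => by push_cast; ring

lemma tsum_nat_add_two_mul_pow_le (ht₀ : 0 ≤ t) (ht₁ : t < 1) :
    ∑' j : ℕ, ((j : ℝ) + 2) * t ^ (j + 2) ≤ 1 / (1 - t) ^ 2 := by
  have hsum := hasSum_coe_mul_geometric_of_norm_lt_one (𝕜 := ℝ) (by rwa [norm_of_nonneg ht₀])
  have h := tsum_comp_le_tsum_of_inj hsum.summable (fun n => by positivity) (add_left_injective 2)
  rw [hsum.tsum_eq] at h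
  calc ∑' j : ℕ, ((j : ℝ) + 2) * t ^ (j + 2)
      = ∑' j : ℕ, ((j + 2 : ℕ) : ℝ) * t ^ (j + 2) := by push_cast; rfl
    _ ≤ t / (1 - t) ^ 2 := h
    _ ≤ 1 / (1 - t) ^ 2 := by gcongr

end GeometricTails

lemma one_add_rpow_le_mul_exp {β a x : ℝ} (hβ : 0 ≤ β) (ha : 0 < a) (hx : 0 ≤ x) :
    (1 + x) ^ β ≤ (β / a + 1) ^ β * exp (a * x) := by
  set m := β / a + 1
  have hm : 1 ≤ m := by have := div_nonneg hβ ha.le; linarith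
  have hlin : 1 + x ≤ m * exp (x / m) :=
    calc 1 + x ≤ m * (x / m + 1) := by rw [mul_add, mul_div_cancel₀ _ (by positivity)]; linarith
      _ ≤ m * exp (x / m) := by gcongr; exact add_one_le_exp _
  have hexp : x / m * β ≤ a * x := by
    rw [div_mul_eq_mul_div, div_le_iff₀ (by positivity)]
    have : β ≤ a * m := by rw [mul_add, mul_div_cancel₀ _ ha.ne']; linarith
    nlinarith
  calc (1 + x) ^ β ≤ (m * exp (x / m)) ^ β := rpow_le_rpow (by linarith) hlin hβ
    _ = m ^ β * exp (x / m * β) := by rw [mul_rpow (by positivity) (exp_pos _).le, exp_mul]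
    _ ≤ m ^ β * exp (a * x) := by gcongr

lemma sqrt_le_mul_one_sub_log_rpow_neg {β u : ℝ} (hβ : 0 ≤ β) (hu₀ : 0 < u)
    (hu₁ : u ≤ 1) :
    √u ≤ (2 * β + 1) ^ β * (1 - log u) ^ (-β) := by
  have hL := one_le_one_sub_log hu₀ hu₁
  have h := one_add_rpow_le_mul_exp hβ (by norm_num : (0 : ℝ) < 1 / 2)
    (neg_nonneg.mpr (log_nonpos hu₀.le hu₁))
  have hsqrt : √u = exp (-(1 / 2 * -log u)) := by
    rw [show -(1 / 2 * -log u) = log u / 2 by ring, ← log_sqrt hu₀.le,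
      exp_log (sqrt_pos.mpr hu₀)]
  rw [show β / (1 / 2) + 1 = 2 * β + 1 by ring, ← sub_eq_add_neg] at h
  rw [rpow_neg (by linarith), ← div_eq_mul_inv, le_div_iff₀ (by positivity), hsqrt,
    exp_neg, ← div_eq_inv_mul, div_le_iff₀ (exp_pos _)]
  linarith

lemma one_sub_log_le_four_mul_log {u k : ℝ} (hu : 0 < u) (hk : 2 ≤ k) (h : 1 ≤ √u * k) :
    1 - log u ≤ 4 * log k := by
  have hsq : 0 ≤ log u / 2 + log k := by
    rw [← log_sqrt hu.le, ← log_mul (sqrt_pos.mpr hu).ne' (by linarith)]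
    exact log_nonneg h
  have hlog2 : (1 : ℝ) / 2 < log 2 := by linarith [log_two_gt_d9]
  have hlogk : log 2 ≤ log k := log_le_log two_pos hk
  linarith

section Estimates

variable {β t : ℝ}

lemma logSeriesTerm_le (hβ : 0 ≤ β) (ht₀ : 0 ≤ t) (ht₁ : t < 1) (j : ℕ) :
    logSeriesTerm β t j ≤
      4 ^ β * (1 - log (1 - t)) ^ (-β) * (((j : ℝ) + 2) * t ^ (j + 2)) +
        log 2 ^ (-β) / √(1 - t) * t ^ (j + 2) := by
  set u := 1 - t
  set k : ℝ := (j : ℝ) + 2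
  have hu : 0 < u := by linarith
  have hk : 2 ≤ k := by linarith [j.cast_nonneg (α := ℝ)]
  have hlogk : 0 < log k := log_nat_add_two_pos j
  have hL := one_le_one_sub_log hu (by linarith)
  have hterm : logSeriesTerm β t j = k * log k ^ (-β) * t ^ (j + 2) := rfl
  rcases le_or_gt 1 (√u * k) with hlarge | hsmall
  · have hlog : log k ^ (-β) ≤ 4 ^ β * (1 - log u) ^ (-β) :=
      calc log k ^ (-β) ≤ ((1 - log u) / 4) ^ (-β) :=
            rpow_le_rpow_of_nonpos (by positivity)
              (by linarith [one_sub_log_le_four_mul_log hu hk hlarge]) (by linarith)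
        _ = 4 ^ β * (1 - log u) ^ (-β) := by
            rw [div_rpow (by linarith) (by norm_num), rpow_neg (by norm_num : (0 : ℝ) ≤ 4),
              div_inv_eq_mul, mul_comm]
    calc logSeriesTerm β t j = log k ^ (-β) * (k * t ^ (j + 2)) := by rw [hterm]; ring
      _ ≤ 4 ^ β * (1 - log u) ^ (-β) * (k * t ^ (j + 2)) := by gcongr
      _ ≤ _ := le_add_of_nonneg_right (by positivity)
  · have hk' : k ≤ 1 / √u := by
      rw [le_div_iff₀ (sqrt_pos.mpr hu)]; linarith
    have hlog : log k ^ (-β) ≤ log 2 ^ (-β) :=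
      rpow_le_rpow_of_nonpos (log_pos one_lt_two) (log_le_log two_pos hk) (by linarith)
    calc logSeriesTerm β t j ≤ 1 / √u * log 2 ^ (-β) * t ^ (j + 2) := by rw [hterm]; gcongr
      _ = log 2 ^ (-β) / √u * t ^ (j + 2) := by ring
      _ ≤ _ := le_add_of_nonneg_left (by positivity)

lemma summable_logSeriesTerm (hβ : 0 ≤ β) (ht₀ : 0 ≤ t) (ht₁ : t < 1) :
    Summable (logSeriesTerm β t) :=
  .of_nonneg_of_le (logSeriesTerm_nonneg β ht₀) (logSeriesTerm_le hβ ht₀ ht₁)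
    (((summable_nat_add_two_mul_pow ht₀ ht₁).mul_left _).add
      ((summable_pow_add_two ht₀ ht₁).mul_left _))

lemma logSeries_le (hβ : 0 ≤ β) (ht₀ : 0 ≤ t) (ht₁ : t < 1) :
    logSeries β t ≤ (4 ^ β + (1 + log 2 ^ (-β)) * (2 * β + 1) ^ β) *
      ((1 - log (1 - t)) ^ (-β) / (1 - t) ^ 2) := by
  set u := 1 - t
  set L := (1 - log u) ^ (-β)
  set M := (2 * β + 1) ^ β
  have hu : 0 < u := by linarith
  have hu₁ : u ≤ 1 := by linarith
  have hL : 0 ≤ L := rpow_nonneg (by linarith [one_le_one_sub_log hu hu₁]) _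
  have hsqrt : √u ≤ M * L := sqrt_le_mul_one_sub_log_rpow_neg hβ hu hu₁
  have hu_sqrt : u ^ 2 ≤ √u :=
    calc u ^ 2 ≤ u := by nlinarith
      _ ≤ √u := (le_sqrt hu.le hu.le).mpr (by nlinarith)
  have htail :
      ∑' j, logSeriesTerm β t j ≤ 4 ^ β * L * (1 / u ^ 2) + log 2 ^ (-β) / √u * (1 / u) :=
    calc ∑' j, logSeriesTerm β t j
        ≤ ∑' j : ℕ, (4 ^ β * L * (((j : ℝ) + 2) * t ^ (j + 2)) +
            log 2 ^ (-β) / √u * t ^ (j + 2)) :=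
          (summable_logSeriesTerm hβ ht₀ ht₁).tsum_le_tsum (logSeriesTerm_le hβ ht₀ ht₁)
            (((summable_nat_add_two_mul_pow ht₀ ht₁).mul_left _).add
              ((summable_pow_add_two ht₀ ht₁).mul_left _))
      _ = 4 ^ β * L * ∑' j : ℕ, ((j : ℝ) + 2) * t ^ (j + 2) +
            log 2 ^ (-β) / √u * ∑' j : ℕ, t ^ (j + 2) := by
          rw [Summable.tsum_add (((summable_nat_add_two_mul_pow ht₀ ht₁).mul_left _))
            ((summable_pow_add_two ht₀ ht₁).mul_left _), tsum_mul_left, tsum_mul_left]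
      _ ≤ 4 ^ β * L * (1 / u ^ 2) + log 2 ^ (-β) / √u * (1 / u) := by
          gcongr
          exacts [tsum_nat_add_two_mul_pow_le ht₀ ht₁, tsum_pow_add_two_le ht₀ ht₁]
  have hone : 1 ≤ M * L / u ^ 2 := by
    rw [le_div_iff₀ (by positivity)]; linarith
  have hsmall : log 2 ^ (-β) / √u * (1 / u) ≤ log 2 ^ (-β) * (M * L / u ^ 2) := by
    have hsq : log 2 ^ (-β) / √u * (1 / u) = log 2 ^ (-β) * (√u / u ^ 2) := by
      field_simp; rw [sq_sqrt hu.le]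
    rw [hsq]
    gcongr
  calc logSeries β t = 1 + ∑' j, logSeriesTerm β t j := logSeries_eq β t
    _ ≤ M * L / u ^ 2 + (4 ^ β * L * (1 / u ^ 2) + log 2 ^ (-β) * (M * L / u ^ 2)) := by
        gcongr; exact htail.trans (by gcongr)
    _ = (4 ^ β + (1 + log 2 ^ (-β)) * M) * (L / u ^ 2) := by ring

lemma logSeriesTerm_ge (hβ : 0 ≤ β) (ht₁ : t < 1) {j : ℕ}
    (hj₁ : 1 ≤ 4 * (1 - t) * ((j : ℝ) + 2)) (hj₂ : 2 * (1 - t) * ((j : ℝ) + 2) ≤ 1) :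
    (1 - log (1 - t)) ^ (-β) / (8 * (1 - t)) ≤ logSeriesTerm β t j := by
  set u := 1 - t
  set k : ℝ := (j : ℝ) + 2
  have hu : 0 < u := by linarith
  have hk : 2 ≤ k := by linarith [j.cast_nonneg (α := ℝ)]
  have hk₁ : 1 / (4 * u) ≤ k := by rw [div_le_iff₀ (by positivity)]; linarith
  have hlogk : 0 < log k := log_nat_add_two_pos j
  have hL : 0 ≤ (1 - log u) ^ (-β) :=
    rpow_nonneg (by linarith [log_nonpos hu.le (by nlinarith)]) _
  have hlog : log k ≤ 1 - log u := by
    have : log k ≤ log (1 / u) := log_le_log (by linarith) (by rw [le_div_iff₀ hu]; nlinarith)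
    rw [one_div, log_inv] at this
    linarith
  have hrpow : (1 - log u) ^ (-β) ≤ log k ^ (-β) :=
    rpow_le_rpow_of_nonpos (log_nat_add_two_pos j) hlog (by linarith)
  have hpow : 1 / 2 ≤ t ^ (j + 2) := by
    have h := one_add_mul_le_pow (a := -u) (by nlinarith) (j + 2)
    rw [show 1 + -u = t by ring] at h
    push_cast at h
    linarith
  calc (1 - log u) ^ (-β) / (8 * u) = 1 / (4 * u) * (1 - log u) ^ (-β) * (1 / 2) := by
        field_simp; ring
    _ ≤ k * log k ^ (-β) * t ^ (j + 2) := by gcongr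
    _ = logSeriesTerm β t j := rfl

lemma le_tsum_logSeriesTerm (hβ : 0 ≤ β) (ht : 3 / 4 ≤ t) (ht₁ : t < 1) :
    (1 - log (1 - t)) ^ (-β) / (1 - t) ^ 2 ≤ 64 * ∑' j, logSeriesTerm β t j := by
  set u := 1 - t
  have hu : 0 < u := by linarith
  have hL : 0 ≤ (1 - log u) ^ (-β) :=
    rpow_nonneg (by linarith [one_le_one_sub_log hu (by linarith)]) _
  set N := ⌊1 / (4 * u)⌋₊
  have hN_le : (N : ℝ) ≤ 1 / (4 * u) := Nat.floor_le (by positivity)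
  have hN_gt : 1 / (4 * u) < N + 1 := Nat.lt_floor_add_one _
  have hN : 1 ≤ N := Nat.le_floor (by rw [Nat.cast_one, le_div_iff₀ (by positivity)]; linarith)
  have hblock : ∀ j ∈ Finset.Ico (N - 1) (2 * N - 1),
      (1 - log u) ^ (-β) / (8 * u) ≤ logSeriesTerm β t j := by
    intro j hj
    rw [Finset.mem_Ico] at hj
    have hlo : ((N : ℝ) + 1) ≤ (j : ℝ) + 2 := by exact_mod_cast (by omega : N + 1 ≤ j + 2)
    have hhi : (j : ℝ) + 2 ≤ 2 * N := by exact_mod_cast (by omega : j + 2 ≤ 2 * N)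
    apply logSeriesTerm_ge hβ ht₁
    · rw [div_lt_iff₀ (by positivity)] at hN_gt; nlinarith
    · rw [le_div_iff₀ (by positivity)] at hN_le; nlinarith
  have hsum := (Finset.card_nsmul_le_sum _ _ _ hblock).trans
    ((summable_logSeriesTerm hβ (by linarith) ht₁).sum_le_tsum _
      fun j _ => logSeriesTerm_nonneg β (by linarith) j)
  rw [Nat.card_Ico, show 2 * N - 1 - (N - 1) = N by omega, nsmul_eq_mul] at hsum
  have hNu : 1 ≤ 8 * u * N := by
    rw [div_lt_iff₀ (by positivity)] at hN_gt
    have : (1 : ℝ) ≤ N := by exact_mod_cast hN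
    nlinarith
  calc (1 - log u) ^ (-β) / u ^ 2 ≤ 8 * u * N * ((1 - log u) ^ (-β) / u ^ 2) :=
        le_mul_of_one_le_left (by positivity) hNu
    _ = 64 * (N * ((1 - log u) ^ (-β) / (8 * u))) := by field_simp; ring
    _ ≤ 64 * ∑' j, logSeriesTerm β t j := by gcongr

lemma le_logSeries (hβ : 0 ≤ β) (ht₀ : 0 ≤ t) (ht₁ : t < 1) :
    (1 - log (1 - t)) ^ (-β) / (1 - t) ^ 2 ≤ 64 * logSeries β t := by
  have htail : 0 ≤ ∑' j, logSeriesTerm β t j := tsum_nonneg (logSeriesTerm_nonneg β ht₀)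
  rw [logSeries_eq]
  rcases le_or_gt (3 / 4) t with ht | ht
  · linarith [le_tsum_logSeriesTerm hβ ht ht₁]
  · have hu : 0 < 1 - t := by linarith
    have hL : (1 - log (1 - t)) ^ (-β) ≤ 1 :=
      rpow_le_one_of_one_le_of_nonpos (one_le_one_sub_log hu (by linarith)) (by linarith)
    calc (1 - log (1 - t)) ^ (-β) / (1 - t) ^ 2 ≤ 1 / (1 - t) ^ 2 := by gcongr
      _ ≤ 16 := by rw [div_le_iff₀ (by positivity)]; nlinarith
      _ ≤ 64 * (1 + ∑' j, logSeriesTerm β t j) := by linarith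

end Estimates

theorem stmt16 (β : ℝ) (hβ : 1 < β) :
    ∃ c : ℝ, 1 ≤ c ∧ ∀ t ∈ Ico (0 : ℝ) 1,
      (1 / c) * ((1 - Real.log (1 - t)) ^ (-β) / (1 - t) ^ 2) ≤ logSeries β t ∧
        logSeries β t ≤ c * ((1 - Real.log (1 - t)) ^ (-β) / (1 - t) ^ 2) := by
  have hβ₀ : 0 ≤ β := by linarith
  set C := 4 ^ β + (1 + log 2 ^ (-β)) * (2 * β + 1) ^ β
  refine ⟨max 64 C, le_max_of_le_left (by norm_num), fun t ⟨ht₀, ht₁⟩ => ?_⟩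
  have hL := one_le_one_sub_log (u := 1 - t) (by linarith) (by linarith)
  have hG : 0 ≤ (1 - log (1 - t)) ^ (-β) / (1 - t) ^ 2 :=
    div_nonneg (rpow_nonneg (by linarith) _) (sq_nonneg _)
  constructor
  · calc 1 / max 64 C * ((1 - log (1 - t)) ^ (-β) / (1 - t) ^ 2)
        ≤ 1 / 64 * ((1 - log (1 - t)) ^ (-β) / (1 - t) ^ 2) := by gcongr; exact le_max_left _ _
      _ ≤ logSeries β t := by linarith [le_logSeries hβ₀ ht₀ ht₁]
  · calc logSeries β t ≤ C * ((1 - log (1 - t)) ^ (-β) / (1 - t) ^ 2) :=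
          logSeries_le hβ₀ ht₀ ht₁
      _ ≤ max 64 C * ((1 - log (1 - t)) ^ (-β) / (1 - t) ^ 2) := by
          gcongr; exact le_max_right _ _
end

section
/- Let β ∈ (0,1), c_β = 4^{β+2} + 2^{β+2} + 1, and g(z,t) = z^{−β−2}(1−t)^{1/z−2}. Then for every t ∈ [0,1), ∫₁^∞ g(z,t) dz ≥ (1/c_β) ∑_{k=1}^∞ g(k,t). -/
/-!
On `[k, k + 1] ⊆ [k, 2k]` the factor `z ^ (-β - 2)` drops by at most `2 ^ (β + 2)`, while
`(1 - t) ^ (1 / z - 2)` only grows since `1 - t ≤ 1` and `1 / z` decreases. Hence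
`g k ≤ 2 ^ (β + 2) * ∫_k^{k+1} g`, and summing over `k` gives the claim with the constant
`2 ^ (β + 2) ≤ c_β`.
-/

open MeasureTheory Set

theorem tsum_le_mul_setIntegral_Ici_of_le_mul {f : ℝ → ℝ} {C : ℝ} (hC : 0 ≤ C)
    (hf_nonneg : ∀ z, 1 ≤ z → 0 ≤ f z) (hf : IntegrableOn f (Ici 1))
    (hle : ∀ n : ℕ, ∀ z ∈ Icc ((n : ℝ) + 1) (n + 2), f (n + 1) ≤ C * f z) :
    ∑' n : ℕ, f (n + 1) ≤ C * ∫ z in Ici 1, f z := by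
  have hint : ∀ n : ℕ, IntervalIntegrable f volume ((n : ℝ) + 1) (n + 2) := fun n =>
    (intervalIntegrable_iff_integrableOn_Ioc_of_le (by linarith)).2 <|
      hf.mono_set (Ioc_subset_Ioi_self.trans (Ioi_subset_Ici (by simp)))
  have hstep : ∀ n : ℕ, f (n + 1) ≤ C * ∫ z in (n : ℝ) + 1..n + 2, f z := fun n =>
    calc f (n + 1) = ∫ _ in (n : ℝ) + 1..n + 2, f (n + 1) := by
          rw [intervalIntegral.integral_const, smul_eq_mul]; ring
      _ ≤ ∫ z in (n : ℝ) + 1..n + 2, C * f z :=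
        intervalIntegral.integral_mono_on (by linarith) intervalIntegrable_const
          ((hint n).const_mul C) (hle n)
      _ = C * ∫ z in (n : ℝ) + 1..n + 2, f z := intervalIntegral.integral_const_mul C f
  refine Real.tsum_le_of_sum_range_le (fun n => hf_nonneg _ (by simp)) fun N => ?_
  calc ∑ n ∈ Finset.range N, f (n + 1)
        ≤ ∑ n ∈ Finset.range N, C * ∫ z in (n : ℝ) + 1..n + 2, f z :=
        Finset.sum_le_sum fun n _ => hstep n
    _ = C * ∫ z in (1 : ℝ)..N + 1, f z := by
        have hadj := intervalIntegral.sum_integral_adjacent_intervals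
          (a := fun k : ℕ => (k : ℝ) + 1) (n := N) fun k _ => by
            convert hint k using 1; push_cast; ring
        simp only [Nat.cast_add, Nat.cast_one, Nat.cast_zero, zero_add, add_assoc,
          one_add_one_eq_two] at hadj
        rw [← Finset.mul_sum, hadj]
    _ ≤ C * ∫ z in Ici 1, f z := by
        refine mul_le_mul_of_nonneg_left ?_ hC
        rw [intervalIntegral.integral_of_le (by simp)]
        exact setIntegral_mono_set hf
          (ae_restrict_of_forall_mem measurableSet_Ici hf_nonneg)
          (Ioc_subset_Ioi_self.trans Ioi_subset_Ici_self).eventuallyLE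

section

variable {p q u : ℝ}

theorem integrableOn_Ici_rpow_mul_rpow_one_div_sub (hp : p < -1) (hu0 : 0 < u) (hu1 : u ≤ 1) :
    IntegrableOn (fun z : ℝ => z ^ p * u ^ (1 / z - q)) (Ici 1) := by
  rw [integrableOn_Ici_iff_integrableOn_Ioi]
  have hcont : ContinuousOn (fun z : ℝ => z ^ p * u ^ (1 / z - q)) (Ioi 1) := by
    intro z hz
    have hz0 : z ≠ 0 := (zero_lt_one.trans hz).ne'
    exact ((continuousAt_id.rpow_const (.inl hz0)).mul
      (continuousAt_const.rpow ((continuousAt_const.div continuousAt_id hz0).sub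
        continuousAt_const) (.inl hu0.ne'))).continuousWithinAt
  refine ((integrableOn_Ioi_rpow_of_lt hp one_pos).mul_const (u ^ (-q))).mono'
    (hcont.aestronglyMeasurable measurableSet_Ioi) ?_
  filter_upwards [ae_restrict_mem measurableSet_Ioi] with z hz
  have hz0 : 0 < z := zero_lt_one.trans hz
  rw [Real.norm_of_nonneg (by positivity)]
  exact mul_le_mul_of_nonneg_left
    (Real.rpow_le_rpow_of_exponent_ge hu0 hu1 (by linarith [one_div_pos.2 hz0])) (by positivity)

theorem rpow_mul_rpow_one_div_sub_le_of_le_two_mul (hp : p ≤ 0) (hu0 : 0 < u) (hu1 : u ≤ 1)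
    {a z : ℝ} (ha : 0 < a) (haz : a ≤ z) (hz : z ≤ 2 * a) :
    a ^ p * u ^ (1 / a - q) ≤ 2 ^ (-p) * (z ^ p * u ^ (1 / z - q)) := by
  have hz0 : 0 < z := ha.trans_le haz
  calc a ^ p * u ^ (1 / a - q) = 2 ^ (-p) * ((2 * a) ^ p * u ^ (1 / a - q)) := by
        rw [Real.mul_rpow zero_le_two ha.le, ← mul_assoc, ← mul_assoc,
          ← Real.rpow_add zero_lt_two, neg_add_cancel, Real.rpow_zero, one_mul]
    _ ≤ 2 ^ (-p) * (z ^ p * u ^ (1 / z - q)) := by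
        gcongr 2 ^ (-p) * (?_ * ?_)
        · exact Real.rpow_le_rpow_of_nonpos hz0 hz hp
        · exact Real.rpow_le_rpow_of_exponent_ge hu0 hu1 (by gcongr)

end

theorem stmt19 (β : ℝ) (hβ : β ∈ Ioo (0 : ℝ) 1) (t : ℝ) (ht : t ∈ Ico (0 : ℝ) 1) :
    (1 / ((4 : ℝ) ^ (β + 2) + (2 : ℝ) ^ (β + 2) + 1)) *
        ∑' k : ℕ, ((k : ℝ) + 1) ^ (-β - 2) * (1 - t) ^ (1 / ((k : ℝ) + 1) - 2) ≤
      ∫ z in Ici (1 : ℝ), z ^ (-β - 2) * (1 - t) ^ (1 / z - 2) := by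
  obtain ⟨hβ0, -⟩ := hβ
  obtain ⟨ht0, ht1⟩ := ht
  have hu0 : 0 < 1 - t := by linarith
  have hu1 : 1 - t ≤ 1 := by linarith
  have hsum := tsum_le_mul_setIntegral_Ici_of_le_mul
    (f := fun z => z ^ (-β - 2) * (1 - t) ^ (1 / z - 2)) (C := 2 ^ (-(-β - 2)))
    (by positivity) (fun z _ => by positivity)
    (integrableOn_Ici_rpow_mul_rpow_one_div_sub (by linarith) hu0 hu1)
    fun n z hz =>
      rpow_mul_rpow_one_div_sub_le_of_le_two_mul (by linarith) hu0 hu1 (by positivity) hz.1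
        (by linarith [hz.2, (n.cast_nonneg : (0 : ℝ) ≤ n)])
  rw [neg_sub, sub_neg_eq_add, add_comm] at hsum
  have hI : 0 ≤ ∫ z in Ici (1 : ℝ), z ^ (-β - 2) * (1 - t) ^ (1 / z - 2) :=
    setIntegral_nonneg measurableSet_Ici fun z (hz : 1 ≤ z) => by positivity
  have h4 : (0 : ℝ) < 4 ^ (β + 2) := by positivity
  rw [one_div_mul_eq_div, div_le_iff₀ (by positivity)]
  nlinarith
end
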